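/- arXiv:1107.1829 — 9 statements merged into one kernel-verified Lean document; each statement's English description precedes it below -/
import Mathlib

section
/- Let G be a finite simple graph and let X be a collision-free configuration in which station r's state has length l_r. Then for every station r, the sum over r' ∈ V_r ∪ {r} of 2^{-l_{r'}} is at most 1. In particular, if every station in V_r ∪ {r} uses states of the same length l, then 2^l ≥ 1 + |V_r|. -/
/-- Kraft's inequality for a finite family of pairwise prefix-free binary words. -/
lemma kraft_aux {V : Type*} [DecidableEq V] (s : Finset V) (X : V → List Bool)
    (hpf : ∀ a ∈ s, ∀ b ∈ s, a ≠ b → ¬ X a <+: X b) :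
    (∑ a ∈ s, ((2 : ℝ) ^ (X a).length)⁻¹) ≤ 1 := by
  classical
  set L := s.sup (fun a => (X a).length) with hLdef
  have hL : ∀ a ∈ s, (X a).length ≤ L := fun a ha => Finset.le_sup (f := fun a => (X a).length) ha
  set S : V → Finset (List.Vector Bool L) :=
    fun a => Finset.univ.filter (fun v => X a <+: v.toList) with hSdef
  have hcard : ∀ a ∈ s, (S a).card = 2 ^ (L - (X a).length) := by
    intro a ha
    have hl := hL a ha
    have : (S a).card = (Finset.univ : Finset (List.Vector Bool (L - (X a).length))).card := by
      refine Finset.card_bij'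
        (fun v _ => (⟨(List.Vector.toList v).drop (X a).length,
          by simp [List.Vector.toList_length]⟩ : List.Vector Bool (L - (X a).length)))
        (fun u _ => (⟨X a ++ List.Vector.toList u,
          by simp [List.Vector.toList_length]; omega⟩ : List.Vector Bool L))
        ?_ ?_ ?_ ?_
      · intro v hv
        exact Finset.mem_univ _
      · intro u hu
        exact Finset.mem_filter.mpr ⟨Finset.mem_univ _, List.prefix_append _ _⟩
      · intro v hv
        simp only [hSdef, Finset.mem_filter, Finset.mem_univ, true_and] at hv
        obtain ⟨t, ht⟩ := hv
        apply List.Vector.toList_injective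
        show X a ++ (List.Vector.toList v).drop (X a).length = List.Vector.toList v
        rw [← ht, List.drop_left]
      · intro u hu
        apply List.Vector.toList_injective
        show (X a ++ List.Vector.toList u).drop (X a).length = List.Vector.toList u
        rw [List.drop_left]
    rw [this, Finset.card_univ, card_vector]
    simp
  have hdisj : ∀ a ∈ s, ∀ b ∈ s, a ≠ b → Disjoint (S a) (S b) := by
    intro a ha b hb hab
    rw [Finset.disjoint_left]
    intro v hva hvb
    simp only [hSdef, Finset.mem_filter, Finset.mem_univ, true_and] at hva hvb
    rcases List.prefix_or_prefix_of_prefix hva hvb with h | h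
    · exact hpf a ha b hb hab h
    · exact hpf b hb a ha hab.symm h
  have hnat : (∑ a ∈ s, 2 ^ (L - (X a).length)) ≤ 2 ^ L := by
    calc (∑ a ∈ s, 2 ^ (L - (X a).length)) = ∑ a ∈ s, (S a).card :=
          Finset.sum_congr rfl (fun a ha => (hcard a ha).symm)
      _ = (s.biUnion S).card := (Finset.card_biUnion hdisj).symm
      _ ≤ Fintype.card (List.Vector Bool L) := Finset.card_le_univ _
      _ = 2 ^ L := by rw [card_vector]; simp
  have h2L : (0 : ℝ) < 2 ^ L := by positivity
  have key : (∑ a ∈ s, ((2 : ℝ) ^ (X a).length)⁻¹) = (∑ a ∈ s, ((2 : ℝ) ^ (L - (X a).length))) / 2 ^ L := by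
    rw [Finset.sum_div]
    apply Finset.sum_congr rfl
    intro a ha
    rw [pow_sub₀ (2 : ℝ) two_ne_zero (hL a ha)]
    field_simp
  rw [key, div_le_one h2L]
  calc (∑ a ∈ s, ((2 : ℝ) ^ (L - (X a).length)))
      = ((∑ a ∈ s, 2 ^ (L - (X a).length) : ℕ) : ℝ) := by push_cast; ring
    _ ≤ ((2 ^ L : ℕ) : ℝ) := by exact_mod_cast hnat
    _ = 2 ^ L := by push_cast; ring

/-- Let `G` be a finite simple graph and `X` a collision-free configuration
(for every pair of distinct stations within two hops of each other — adjacent or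
sharing a common neighbor — neither state is a prefix of the other), where station
`r`'s state `X r` has length `l_r = (X r).length`. Then for every station `r`,
`∑_{r' ∈ V_r ∪ {r}} 2^{-l_{r'}} ≤ 1`; in particular, if every station in
`V_r ∪ {r}` uses states of the same length `l`, then `2^l ≥ 1 + |V_r|`. -/
theorem collisionFree_sum_le_one {V : Type*} [Fintype V] [DecidableEq V]
    (G : SimpleGraph V) [DecidableRel G.Adj] (X : V → List Bool)
    (hcf : ∀ r r' : V, r ≠ r' → (G.Adj r r' ∨ ∃ z, G.Adj r z ∧ G.Adj z r') →
      ¬ X r <+: X r' ∧ ¬ X r' <+: X r) :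
    ∀ r : V,
      (∑ r' ∈ insert r (G.neighborFinset r), ((2 : ℝ) ^ (X r').length)⁻¹) ≤ 1 ∧
      ∀ l : ℕ, (∀ r' ∈ insert r (G.neighborFinset r), (X r').length = l) →
        1 + G.degree r ≤ 2 ^ l := by
  intro r
  set s := insert r (G.neighborFinset r) with hs
  have hpf : ∀ a ∈ s, ∀ b ∈ s, a ≠ b → ¬ X a <+: X b := by
    intro a ha b hb hab
    have h2 : G.Adj a b ∨ ∃ z, G.Adj a z ∧ G.Adj z b := by
      simp only [hs, Finset.mem_insert, SimpleGraph.mem_neighborFinset] at ha hb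
      rcases ha with ha | ha <;> rcases hb with hb | hb
      · exact absurd (ha.trans hb.symm) hab
      · subst ha; exact Or.inl hb
      · subst hb; exact Or.inl ha.symm
      · exact Or.inr ⟨r, ha.symm, hb⟩
    exact (hcf a b hab h2).1
  have hsum := kraft_aux s X hpf
  refine ⟨hsum, ?_⟩
  intro l hl
  have hcard : s.card = 1 + G.degree r := by
    rw [hs, Finset.card_insert_of_notMem (by simp), SimpleGraph.card_neighborFinset_eq_degree]
    omega
  have : (∑ a ∈ s, ((2 : ℝ) ^ (X a).length)⁻¹) = (1 + G.degree r) * ((2 : ℝ) ^ l)⁻¹ := by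
    rw [Finset.sum_congr rfl (fun a ha => by rw [hl a ha]), Finset.sum_const, hcard]
    simp [mul_comm]
  rw [this] at hsum
  have h2l : (0 : ℝ) < 2 ^ l := by positivity
  have : ((1 + G.degree r : ℕ) : ℝ) ≤ 2 ^ l := by
    rw [← div_le_one h2l] at *
    push_cast
    calc ((1 : ℝ) + G.degree r) / 2 ^ l = (1 + G.degree r) * ((2:ℝ) ^ l)⁻¹ := by ring
      _ ≤ 1 := hsum
  exact_mod_cast this
end

section
/- Let G be a finite simple graph whose vertex set is a finite set of distinct real numbers, and suppose that whenever stations x < y are adjacent and z is a station with x < z < y, then z is adjacent to both x and y. If each station r uses states of length l_r = ⌈log₂( max over r' ∈ V_r ∪ {r} of (1 + |V_{r'}|) )⌉, then a collision-free configuration exists: one can assign to each station r a binary string X_r of length l_r such that for every pair of distinct stations within two hops of each other, neither of their states is a prefix of the other. -/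
/-- One-dimensional networks: the vertices are distinct real numbers (positions given
by an injective map `pos`), and whenever stations `x < y` are adjacent and `z` lies
strictly between them, `z` is adjacent to both `x` and `y`. If each station `r` uses
states of length `l_r = ⌈log₂(max_{r' ∈ V_r ∪ {r}} (1 + |V_{r'}|))⌉`, then a
collision-free configuration exists: an assignment `X` of binary strings of these
lengths such that for every pair of distinct stations within two hops of each other,
neither of their states is a prefix of the other. -/
theorem oneDim_collisionFree_exists {V : Type*} [Fintype V] [DecidableEq V]
    (G : SimpleGraph V) [DecidableRel G.Adj]
    (pos : V → ℝ) (hinj : Function.Injective pos)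
    (hline : ∀ x y z : V, G.Adj x y → pos x < pos z → pos z < pos y →
      G.Adj x z ∧ G.Adj z y) :
    ∃ X : V → List Bool,
      (∀ r : V, (X r).length =
        Nat.clog 2 ((insert r (G.neighborFinset r)).sup fun r' => 1 + G.degree r')) ∧
      ∀ r r' : V, r ≠ r' → (G.Adj r r' ∨ ∃ z, G.Adj r z ∧ G.Adj z r') →
        ¬ X r <+: X r' ∧ ¬ X r' <+: X r := by
  classical
  set L : V → ℕ := fun r =>
    Nat.clog 2 ((insert r (G.neighborFinset r)).sup fun r' => 1 + G.degree r') with hLdef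
  set c : V → ℕ := fun r => (Finset.univ.filter (fun z => pos z < pos r)).card with hcdef
  set X : V → List Bool := fun r => (List.range (L r)).map fun i => (c r).testBit i with hXdef
  -- monotonicity of c
  have hcmono : ∀ a b : V, pos a < pos b → c a < c b := by
    intro a b hab
    apply Finset.card_lt_card
    constructor
    · intro w hw
      simp only [Finset.mem_filter, Finset.mem_univ, true_and] at hw ⊢
      exact hw.trans hab
    · intro hsub
      have ha : a ∈ Finset.univ.filter (fun z => pos z < pos b) := by
        simp [hab]
      have := hsub ha
      simp at this
  -- the main combinatorial lemma
  have main : ∀ r r' : V, r ≠ r' → pos r < pos r' →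
      (G.Adj r r' ∨ ∃ z, G.Adj r z ∧ G.Adj z r') →
      0 < c r' - c r ∧ c r' - c r < 2 ^ L r ∧ c r' - c r < 2 ^ L r' := by
    intro r r' hne hlt htwo
    -- pick a common "witness" z
    obtain ⟨z, hz1, hz2⟩ : ∃ z : V, (z = r ∨ G.Adj z r) ∧ (z = r' ∨ G.Adj z r') := by
      rcases htwo with h | ⟨z, h1, h2⟩
      · exact ⟨r, Or.inl rfl, Or.inr h⟩
      · exact ⟨z, Or.inr h1.symm, Or.inr h2⟩
    -- the interval set
    set T : Finset V := Finset.univ.filter (fun w => pos r ≤ pos w ∧ pos w < pos r') with hTdef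
    have hrT : r ∈ T := by simp [hTdef, hlt]
    have hdiff : c r' - c r ≤ T.card := by
      have hsub : Finset.univ.filter (fun z => pos z < pos r')
          ⊆ (Finset.univ.filter (fun z => pos z < pos r)) ∪ T := by
        intro w hw
        simp only [Finset.mem_filter, Finset.mem_univ, true_and, Finset.mem_union,
          hTdef] at hw ⊢
        rcases lt_or_ge (pos w) (pos r) with h | h
        · exact Or.inl h
        · exact Or.inr ⟨h, hw⟩
      have h4 : c r' ≤ c r + T.card :=
        (Finset.card_le_card hsub).trans (Finset.card_union_le _ _)
      omega
    -- adjacency of interior points to z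
    have hadj : ∀ w ∈ T, w ≠ z → G.Adj z w := by
      intro w hw hwz
      simp only [hTdef, Finset.mem_filter, Finset.mem_univ, true_and] at hw
      obtain ⟨hw1, hw2⟩ := hw
      rcases hz1 with rfl | hzr
      · -- z = r
        have hzr' : G.Adj z r' := by
          rcases hz2 with rfl | h
          · exact absurd rfl hne
          · exact h
        have hw1' : pos z < pos w := lt_of_le_of_ne hw1 (fun h => hwz (hinj h).symm)
        exact (hline z r' w hzr' hw1' hw2).1
      · -- G.Adj z r
        rcases eq_or_ne w r with rfl | hwr
        · exact hzr
        have hw1' : pos r < pos w := lt_of_le_of_ne hw1 (fun h => hwr (hinj h).symm)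
        rcases lt_trichotomy (pos w) (pos z) with h | h | h
        · exact ((hline r z w hzr.symm hw1' h).2).symm
        · exact absurd (hinj h) hwz
        · rcases hz2 with rfl | hh
          · exact absurd (h.trans hw2) (lt_irrefl _)
          · exact (hline z r' w hh h hw2).1
    -- |T| ≤ deg z
    have hTcard : T.card ≤ G.degree z := by
      rcases eq_or_ne z r' with rfl | hzr'
      · -- z = r', so z ∉ T, and T ⊆ N(z)
        have hsub : T ⊆ G.neighborFinset z := by
          intro w hw
          rw [SimpleGraph.mem_neighborFinset]
          refine hadj w hw ?_
          rintro rfl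
          simp only [hTdef, Finset.mem_filter, Finset.mem_univ, true_and] at hw
          exact absurd hw.2 (lt_irrefl _)
        simpa [SimpleGraph.card_neighborFinset_eq_degree] using Finset.card_le_card hsub
      · have hadjzr' : G.Adj z r' := hz2.resolve_left hzr'
        have hdpos : 1 ≤ G.degree z := by
          rw [← SimpleGraph.card_neighborFinset_eq_degree]
          exact Finset.card_pos.mpr ⟨r', by simpa using hadjzr'⟩
        have hsub : T \ {z} ⊆ G.neighborFinset z \ {r'} := by
          intro w hw
          simp only [Finset.mem_sdiff, Finset.mem_singleton] at hw ⊢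
          refine ⟨by rw [SimpleGraph.mem_neighborFinset]; exact hadj w hw.1 hw.2, ?_⟩
          rintro rfl
          simp only [hTdef, Finset.mem_filter, Finset.mem_univ, true_and] at hw
          exact absurd hw.1.2 (lt_irrefl _)
        have h1 : (T \ {z}).card ≤ (G.neighborFinset z \ {r'}).card :=
          Finset.card_le_card hsub
        have h2 : (G.neighborFinset z \ {r'}).card = G.degree z - 1 := by
          rw [Finset.card_sdiff_of_subset (by simpa using hadjzr')]
          simp [SimpleGraph.card_neighborFinset_eq_degree]
        have h3 : T.card ≤ (T \ {z}).card + 1 := by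
          have : T ⊆ (T \ {z}) ∪ {z} := by
            intro w hw
            by_cases hwz : w = z
            · simp [hwz]
            · simp [Finset.mem_sdiff, hw, hwz]
          have := (Finset.card_le_card this).trans (Finset.card_union_le _ _)
          simpa using this
        omega
    -- 1 + deg z ≤ 2^(L a) for a ∈ {r, r'}
    have hbound : ∀ a : V, z ∈ insert a (G.neighborFinset a) → c r' - c r < 2 ^ L a := by
      intro a hmem
      have h1 : 1 + G.degree z ≤ (insert a (G.neighborFinset a)).sup fun r' => 1 + G.degree r' :=
        Finset.le_sup (f := fun r' => 1 + G.degree r') hmem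
      have h2 : ((insert a (G.neighborFinset a)).sup fun r' => 1 + G.degree r') ≤ 2 ^ L a :=
        Nat.le_pow_clog (by norm_num) _
      have : c r' - c r ≤ G.degree z := hdiff.trans hTcard
      omega
    have hzr : z ∈ insert r (G.neighborFinset r) := by
      rcases hz1 with rfl | h
      · exact Finset.mem_insert_self _ _
      · exact Finset.mem_insert_of_mem (by simpa using h.symm)
    have hzr' : z ∈ insert r' (G.neighborFinset r') := by
      rcases hz2 with rfl | h
      · exact Finset.mem_insert_self _ _
      · exact Finset.mem_insert_of_mem (by simpa using h.symm)
    exact ⟨by have := hcmono r r' hlt; omega, hbound r hzr, hbound r' hzr'⟩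
  -- prefix implies congruence of ranks
  have hXlen : ∀ a : V, (X a).length = L a := by intro a; simp [hXdef]
  have pref : ∀ a b : V, X a <+: X b → c a % 2 ^ L a = c b % 2 ^ L a := by
    intro a b h
    apply Nat.eq_of_testBit_eq
    intro i
    rw [Nat.testBit_mod_two_pow, Nat.testBit_mod_two_pow]
    by_cases hi : i < L a
    · have hia : i < (X a).length := by rw [hXlen]; exact hi
      have := h.getElem hia
      simp only [hXdef, List.getElem_map, List.getElem_range] at this
      simp [hi, this]
    · simp [hi]
  -- key one-sided statement
  have key : ∀ r r' : V, r ≠ r' →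
      (G.Adj r r' ∨ ∃ z, G.Adj r z ∧ G.Adj z r') → ¬ X r <+: X r' := by
    intro r r' hne htwo hp
    have hmod := pref r r' hp
    rcases lt_trichotomy (pos r) (pos r') with hlt | heq | hgt
    · obtain ⟨h1, h2, _⟩ := main r r' hne hlt htwo
      have hle : c r ≤ c r' := (hcmono r r' hlt).le
      have hdvd : 2 ^ L r ∣ c r' - c r := (Nat.modEq_iff_dvd' hle).mp hmod
      have := Nat.le_of_dvd h1 hdvd
      omega
    · exact hne (hinj heq)
    · have htwo' : G.Adj r' r ∨ ∃ z, G.Adj r' z ∧ G.Adj z r := by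
        rcases htwo with h | ⟨z, h1, h2⟩
        · exact Or.inl h.symm
        · exact Or.inr ⟨z, h2.symm, h1.symm⟩
      obtain ⟨h1, h2, h3⟩ := main r' r hne.symm hgt htwo'
      have hle : c r' ≤ c r := (hcmono r' r hgt).le
      have hdvd : 2 ^ L r ∣ c r - c r' := (Nat.modEq_iff_dvd' hle).mp hmod.symm
      have := Nat.le_of_dvd h1 hdvd
      omega
  refine ⟨X, fun r => hXlen r, ?_⟩
  intro r r' hne htwo
  have htwo' : G.Adj r' r ∨ ∃ z, G.Adj r' z ∧ G.Adj z r := by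
    rcases htwo with h | ⟨z, h1, h2⟩
    · exact Or.inl h.symm
    · exact Or.inr ⟨z, h2.symm, h1.symm⟩
  exact ⟨key r r' hne htwo, key r' r hne.symm htwo'⟩
end

section
/- Let G be a finite simple graph and for each station r let V²_r denote the set of stations at distance 1 or 2 from r in G. If each station r uses states of length l̄_r = ⌈log₂( max over r' ∈ V²_r ∪ {r} of (1 + |V²_{r'}|) )⌉, then a collision-free configuration exists: one can assign to each station r a binary string X_r of length l̄_r such that for every pair of distinct stations within two hops of each other, neither of their states is a prefix of the other. -/
/-- `V²_r`: the set of stations at distance 1 or 2 from `r` in `G`, i.e. the distinct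
stations that are adjacent to `r` or share a common neighbor with `r`. -/
def twoHopSet {V : Type*} [Fintype V] [DecidableEq V]
    (G : SimpleGraph V) [DecidableRel G.Adj] (r : V) : Finset V :=
  Finset.univ.filter fun r' => r ≠ r' ∧ (G.Adj r r' ∨ ∃ z, G.Adj r z ∧ G.Adj z r')

lemma mem_twoHopSet_iff {V : Type*} [Fintype V] [DecidableEq V]
    (G : SimpleGraph V) [DecidableRel G.Adj] (r r' : V) :
    r' ∈ twoHopSet G r ↔ (r ≠ r' ∧ (G.Adj r r' ∨ ∃ z, G.Adj r z ∧ G.Adj z r')) := by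
  simp [twoHopSet]

lemma twoHopSet_symm {V : Type*} [Fintype V] [DecidableEq V]
    (G : SimpleGraph V) [DecidableRel G.Adj] {r r' : V}
    (h : r' ∈ twoHopSet G r) : r ∈ twoHopSet G r' := by
  rw [mem_twoHopSet_iff] at h ⊢
  obtain ⟨hne, h | ⟨z, hz1, hz2⟩⟩ := h
  · exact ⟨hne.symm, Or.inl h.symm⟩
  · exact ⟨hne.symm, Or.inr ⟨z, hz2.symm, hz1.symm⟩⟩

/-- Greedy coloring of the two-hop graph with per-vertex color bound. -/
lemma exists_twoHop_coloring {V : Type*} [Fintype V] [DecidableEq V]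
    (G : SimpleGraph V) [DecidableRel G.Adj] :
    ∃ c : V → ℕ, ∀ r : V, c r ≤ (twoHopSet G r).card ∧
      ∀ r' ∈ twoHopSet G r, c r ≠ c r' := by
  suffices h : ∀ s : Finset V, ∃ c : V → ℕ, ∀ r ∈ s, c r ≤ (twoHopSet G r).card ∧
      ∀ r' ∈ s, r' ∈ twoHopSet G r → c r ≠ c r' by
    obtain ⟨c, hc⟩ := h Finset.univ
    exact ⟨c, fun r => ⟨(hc r (Finset.mem_univ r)).1,
      fun r' hr' => (hc r (Finset.mem_univ r)).2 r' (Finset.mem_univ r') hr'⟩⟩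
  intro s
  induction s using Finset.induction with
  | empty => exact ⟨fun _ => 0, fun r hr => absurd hr (Finset.notMem_empty r)⟩
  | @insert a t ha ih =>
    obtain ⟨c, hc⟩ := ih
    have hcard : ((t ∩ twoHopSet G a).image c).card <
        (Finset.range ((twoHopSet G a).card + 1)).card := by
      calc ((t ∩ twoHopSet G a).image c).card ≤ (t ∩ twoHopSet G a).card :=
            Finset.card_image_le
        _ ≤ (twoHopSet G a).card := Finset.card_le_card (Finset.inter_subset_right)
        _ < (twoHopSet G a).card + 1 := Nat.lt_succ_self _
        _ = (Finset.range ((twoHopSet G a).card + 1)).card := by simp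
    obtain ⟨v, hvmem, hvnot⟩ := Finset.not_subset.mp
      (fun hsub => absurd (Finset.card_le_card hsub) (not_le.mpr hcard))
    refine ⟨Function.update c a v, ?_⟩
    intro r hr
    rcases Finset.mem_insert.mp hr with rfl | hrt
    · constructor
      · simpa [Function.update_self] using Nat.lt_succ_iff.mp (Finset.mem_range.mp hvmem)
      · intro r' hr' hhop
        rcases Finset.mem_insert.mp hr' with rfl | hr't
        · exact absurd hhop (by simp [mem_twoHopSet_iff])
        · have hne : r ≠ r' := ((mem_twoHopSet_iff G r r').mp hhop).1
          rw [Function.update_self, Function.update_of_ne hne.symm]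
          intro hEq
          exact hvnot (Finset.mem_image.mpr ⟨r', Finset.mem_inter.mpr ⟨hr't, hhop⟩, hEq.symm⟩)
    · have hra : r ≠ a := fun h => ha (h ▸ hrt)
      rw [Function.update_of_ne hra]
      refine ⟨(hc r hrt).1, ?_⟩
      intro r' hr' hhop
      rcases Finset.mem_insert.mp hr' with rfl | hr't
      · rw [Function.update_self]
        intro hEq
        exact hvnot (Finset.mem_image.mpr
          ⟨r, Finset.mem_inter.mpr ⟨hrt, twoHopSet_symm G hhop⟩, hEq⟩)
      · have hne : r' ≠ a := fun h => ha (h ▸ hr't)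
        rw [Function.update_of_ne hne]
        exact (hc r hrt).2 r' hr't hhop

/-- Fixed-width LSB-first binary encodings: prefix relation forces equality of the
encoded numbers when both are below `2 ^ L` with `L` the shorter width. -/
lemma encode_prefix_eq {n m L L' : ℕ}
    (hn : n < 2 ^ L) (hm : m < 2 ^ L)
    (h : (List.ofFn fun i : Fin L => n.testBit i) <+: (List.ofFn fun i : Fin L' => m.testBit i)) :
    n = m := by
  apply Nat.eq_of_testBit_eq
  intro i
  rcases lt_or_ge i L with hi | hi
  · have hLL' : L ≤ L' := by simpa using h.length_le
    have hi' : i < L' := lt_of_lt_of_le hi hLL'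
    have := h.getElem (by simpa using hi)
    simpa using this
  · rw [Nat.testBit_lt_two_pow (lt_of_lt_of_le hn (Nat.pow_le_pow_right (by norm_num) hi)),
      Nat.testBit_lt_two_pow (lt_of_lt_of_le hm (Nat.pow_le_pow_right (by norm_num) hi))]

/-- If each station `r` uses states of length
`l̄_r = ⌈log₂(max_{r' ∈ V²_r ∪ {r}} (1 + |V²_{r'}|))⌉`, then a collision-free
configuration exists: an assignment `X` of binary strings of these lengths such that
for every pair of distinct stations within two hops of each other, neither of their
states is a prefix of the other. -/
theorem twoHopBound_collisionFree_exists {V : Type*} [Fintype V] [DecidableEq V]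
    (G : SimpleGraph V) [DecidableRel G.Adj] :
    ∃ X : V → List Bool,
      (∀ r : V, (X r).length =
        Nat.clog 2 ((insert r (twoHopSet G r)).sup fun r' => 1 + (twoHopSet G r').card)) ∧
      ∀ r r' : V, r ≠ r' → (G.Adj r r' ∨ ∃ z, G.Adj r z ∧ G.Adj z r') →
        ¬ X r <+: X r' ∧ ¬ X r' <+: X r := by
  obtain ⟨c, hc⟩ := exists_twoHop_coloring G
  set L : V → ℕ := fun r =>
    Nat.clog 2 ((insert r (twoHopSet G r)).sup fun r' => 1 + (twoHopSet G r').card) with hL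
  have hbound : ∀ r r' : V, r' ∈ insert r (twoHopSet G r) → c r' < 2 ^ L r := by
    intro r r' hmem
    have h1 : 1 + (twoHopSet G r').card ≤
        (insert r (twoHopSet G r)).sup fun r'' => 1 + (twoHopSet G r'').card :=
      Finset.le_sup (f := fun r'' => 1 + (twoHopSet G r'').card) hmem
    have h2 : ((insert r (twoHopSet G r)).sup fun r'' => 1 + (twoHopSet G r'').card) ≤
        2 ^ L r := Nat.le_pow_clog (by norm_num) _
    have := (hc r').1
    omega
  refine ⟨fun r => List.ofFn fun i : Fin (L r) => (c r).testBit i, fun r => by simp only [List.length_ofFn, hL], ?_⟩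
  intro r r' hne hhop
  have hmem : r' ∈ twoHopSet G r := (mem_twoHopSet_iff G r r').mpr ⟨hne, hhop⟩
  have hmem' : r ∈ twoHopSet G r' := twoHopSet_symm G hmem
  have hcc : c r ≠ c r' := (hc r).2 r' hmem
  constructor
  · intro hpre
    exact hcc (encode_prefix_eq
      (hbound r r (Finset.mem_insert_self _ _))
      (hbound r r' (Finset.mem_insert_of_mem hmem)) hpre)
  · intro hpre
    exact hcc.symm (encode_prefix_eq
      (hbound r' r' (Finset.mem_insert_self _ _))
      (hbound r' r (Finset.mem_insert_of_mem hmem')) hpre)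
end

section
/- Let G be a finite simple graph whose square G² is chordal, where G² has the same vertex set as G and an edge between any two distinct stations at distance 1 or 2 in G. For each station r let c_r denote the maximum cardinality of a clique of G² containing r. If each station r uses states of length l_r = ⌈log₂ c_r⌉, then a collision-free configuration exists: one can assign to each station r a binary string X_r of length l_r such that for every pair of distinct stations within two hops of each other, neither of their states is a prefix of the other. -/
/-- The square `G²` of a graph `G`: same vertex set, with an edge between any two
distinct stations at distance 1 or 2 in `G`. -/
def graphSquare {V : Type*} (G : SimpleGraph V) : SimpleGraph V where
  Adj x y := x ≠ y ∧ (G.Adj x y ∨ ∃ z, G.Adj x z ∧ G.Adj z y)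
  symm := by
    constructor
    rintro x y ⟨hne, h⟩
    refine ⟨hne.symm, ?_⟩
    rcases h with h | ⟨z, h1, h2⟩
    · exact Or.inl h.symm
    · exact Or.inr ⟨z, h2.symm, h1.symm⟩
  loopless := by constructor; rintro x ⟨hne, -⟩; exact hne rfl

/-- A graph is chordal if every cycle of length at least four has a chord, i.e. an
edge of the graph between two vertices of the cycle that is not an edge of the cycle. -/
def IsChordal {V : Type*} (H : SimpleGraph V) : Prop :=
  ∀ ⦃v : V⦄ (w : H.Walk v v), w.IsCycle → 4 ≤ w.length →
    ∃ x y : V, x ∈ w.support ∧ y ∈ w.support ∧ H.Adj x y ∧ s(x, y) ∉ w.edges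

open SimpleGraph

set_option linter.unusedSectionVars false

section CollisionFreeAux

variable {V : Type*} {H : SimpleGraph V}

/-- Connectivity through vertices satisfying `P`. -/
def ConnOn (H : SimpleGraph V) (P : V → Prop) (a b : V) : Prop :=
  ∃ w : H.Walk a b, ∀ x ∈ w.support, P x

lemma connOn_refl {P : V → Prop} {a : V} (h : P a) : ConnOn H P a a :=
  ⟨SimpleGraph.Walk.nil, by simp [h]⟩

lemma connOn_symm {P : V → Prop} {a b : V} (h : ConnOn H P a b) : ConnOn H P b a := by
  obtain ⟨w, hw⟩ := h
  exact ⟨w.reverse, by simpa [SimpleGraph.Walk.support_reverse] using hw⟩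

lemma connOn_trans {P : V → Prop} {a b c : V} (h1 : ConnOn H P a b) (h2 : ConnOn H P b c) :
    ConnOn H P a c := by
  obtain ⟨w1, hw1⟩ := h1
  obtain ⟨w2, hw2⟩ := h2
  refine ⟨w1.append w2, ?_⟩
  intro x hx
  rw [SimpleGraph.Walk.support_append] at hx
  rcases List.mem_append.1 hx with hx | hx
  · exact hw1 x hx
  · exact hw2 x (List.mem_of_mem_tail hx)

lemma connOn_adj {P : V → Prop} {a b : V} (h : H.Adj a b) (ha : P a) (hb : P b) :
    ConnOn H P a b :=
  ⟨SimpleGraph.Walk.cons h SimpleGraph.Walk.nil, by simp [ha, hb]⟩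

lemma connOn_of_mem_support [DecidableEq V] {P : V → Prop} {a b u : V} (w : H.Walk a b)
    (hw : ∀ x ∈ w.support, P x) (hu : u ∈ w.support) : ConnOn H P a u :=
  ⟨w.takeUntil u hu, fun x hx => hw x (w.support_takeUntil_subset hu hx)⟩

/-- Shortcut lemma: a chord on a walk gives a strictly shorter walk with smaller support. -/
lemma shortcut [DecidableEq V] {x y : V} :
    ∀ (P : H.Walk x y) (u v : V), u ∈ P.support → v ∈ P.support → H.Adj u v →
      s(u, v) ∉ P.edges →
      ∃ W : H.Walk x y, (∀ z ∈ W.support, z ∈ P.support) ∧ W.length < P.length := by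
  intro P
  induction P with
  | nil =>
    intro u v hu hv hadj _
    simp only [SimpleGraph.Walk.support_nil, List.mem_singleton] at hu hv
    subst hu; subst hv
    exact absurd hadj (H.irrefl)
  | @cons x c y h P' ih =>
    intro u v hu hv hadj hne
    rw [SimpleGraph.Walk.support_cons, List.mem_cons] at hu hv
    have hne' : s(u, v) ∉ P'.edges := fun hh => hne (by simp [SimpleGraph.Walk.edges_cons, hh])
    -- helper for the case u = x, v ∈ P'.support
    have key : ∀ (v : V), v ∈ P'.support → H.Adj x v → s(x, v) ∉ (SimpleGraph.Walk.cons h P').edges →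
        ∃ W : H.Walk x y, (∀ z ∈ W.support, z ∈ (SimpleGraph.Walk.cons h P').support) ∧
          W.length < (SimpleGraph.Walk.cons h P').length := by
      intro v hv hxv hnexv
      have hcv : c ≠ v := by
        rintro rfl
        exact hnexv (by simp [SimpleGraph.Walk.edges_cons])
      refine ⟨SimpleGraph.Walk.cons hxv (P'.dropUntil v hv), ?_, ?_⟩
      · intro z hz
        rw [SimpleGraph.Walk.support_cons, List.mem_cons] at hz
        rcases hz with rfl | hz
        · simp [SimpleGraph.Walk.support_cons]
        · simp only [SimpleGraph.Walk.support_cons, List.mem_cons]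
          exact Or.inr (P'.support_dropUntil_subset hv hz)
      · have hspec := P'.take_spec hv
        have hlen : (P'.takeUntil v hv).length + (P'.dropUntil v hv).length = P'.length := by
          rw [← SimpleGraph.Walk.length_append, hspec]
        have htu : 1 ≤ (P'.takeUntil v hv).length := by
          by_contra hcon
          push_neg at hcon
          interval_cases hh : (P'.takeUntil v hv).length
          · exact hcv (SimpleGraph.Walk.eq_of_length_eq_zero hh)
        simp only [SimpleGraph.Walk.length_cons]
        omega
    rcases hu with rfl | hu
    · rcases hv with rfl | hv
      · exact absurd hadj (H.irrefl)
      · exact key v hv hadj hne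
    · rcases hv with rfl | hv
      · have := key u hu hadj.symm (by rwa [Sym2.eq_swap])
        exact this
      · obtain ⟨W', hW1, hW2⟩ := ih u v hu hv hadj hne'
        refine ⟨SimpleGraph.Walk.cons h W', ?_, by simpa using Nat.succ_lt_succ hW2⟩
        intro z hz
        rw [SimpleGraph.Walk.support_cons, List.mem_cons] at hz
        rcases hz with rfl | hz
        · simp [SimpleGraph.Walk.support_cons]
        · simp only [SimpleGraph.Walk.support_cons, List.mem_cons]
          exact Or.inr (hW1 z hz)


variable [DecidableEq V]

lemma nbr_of_walk {s S : Finset V} {a' b' x : V} (w : H.Walk a' b')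
    (hsup : ∀ z ∈ w.support, z ∈ s ∧ z ∉ S.erase x)
    (hxw : x ∈ w.support) (hxa : x ≠ a') :
    ∃ z, H.Adj x z ∧ (z ∈ s ∧ z ∉ S) ∧ ConnOn H (fun z => z ∈ s ∧ z ∉ S) a' z := by
  obtain ⟨q, hqsup, hqcount⟩ : ∃ q : H.Walk x a',
      (∀ z ∈ q.support, z ∈ s ∧ z ∉ S.erase x) ∧ List.count x q.support = 1 := by
    refine ⟨(w.takeUntil x hxw).reverse, ?_, ?_⟩
    · intro z hz
      rw [SimpleGraph.Walk.support_reverse, List.mem_reverse] at hz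
      exact hsup z (w.support_takeUntil_subset hxw hz)
    · rw [SimpleGraph.Walk.support_reverse, List.count_reverse]
      exact w.count_support_takeUntil_eq_one hxw
  cases q with
  | nil => exact absurd rfl hxa
  | @cons _ z _ h q' =>
    have hz' : x ∉ q'.support := by
      rw [SimpleGraph.Walk.support_cons, List.count_cons_self] at hqcount
      simp only [Nat.add_eq_right, List.count_eq_zero] at hqcount
      exact hqcount
    have hq'sup : ∀ u ∈ q'.support, u ∈ s ∧ u ∉ S := by
      intro u hu
      have h1 := hqsup u (by rw [SimpleGraph.Walk.support_cons]; exact List.mem_cons_of_mem _ hu)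
      refine ⟨h1.1, fun hu2 => ?_⟩
      have : u ≠ x := fun hh => hz' (hh ▸ hu)
      exact h1.2 (Finset.mem_erase.2 ⟨this, hu2⟩)
    refine ⟨z, h, hq'sup z q'.start_mem_support, ?_⟩
    exact connOn_symm ⟨q', hq'sup⟩

lemma length_eq_one_adj {x y : V} (W : H.Walk x y) (h : W.length = 1) : H.Adj x y := by
  cases W with
  | nil => simp at h
  | cons hadj W' =>
    rw [SimpleGraph.Walk.length_cons] at h
    have := SimpleGraph.Walk.eq_of_length_eq_zero (by omega : W'.length = 0)
    rwa [this] at hadj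

/-- `v` is simplicial within `s`: its neighbors in `s` are pairwise adjacent. -/
def SimpIn (H : SimpleGraph V) (v : V) (s : Finset V) : Prop :=
  ∀ u1 ∈ s, ∀ u2 ∈ s, H.Adj v u1 → H.Adj v u2 → u1 ≠ u2 → H.Adj u1 u2


lemma sep_clique (hch : IsChordal H) (s S : Finset V) (a b : V)
    (haS : a ∉ S) (hbS : b ∉ S)
    (hsep : ¬ ConnOn H (fun z => z ∈ s ∧ z ∉ S) a b)
    (hmin : ∀ x ∈ S, ConnOn H (fun z => z ∈ s ∧ z ∉ S.erase x) a b)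
    {x y : V} (hx : x ∈ S) (hy : y ∈ S) (hxy : x ≠ y) : H.Adj x y := by
  by_contra hnadj
  set P : V → Prop := fun z => z ∈ s ∧ z ∉ S with hP
  have hnoedge : ∀ u v, (P u ∧ ConnOn H P a u) → (P v ∧ ConnOn H P b v) → H.Adj u v → False :=
    fun u v h1 h2 hadj =>
    hsep (connOn_trans (connOn_trans h1.2 (connOn_adj hadj h1.1 h2.1)) (connOn_symm h2.2))
  have hzw_mem : ∀ z ∈ S, ∀ (w : H.Walk a b),
      (∀ u ∈ w.support, u ∈ s ∧ u ∉ S.erase z) → z ∈ w.support := by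
    intro z hz w hw
    by_contra hcon
    refine hsep ⟨w, fun u hu => ?_⟩
    have h1 := hw u hu
    exact ⟨h1.1, fun hu2 => h1.2 (Finset.mem_erase.2 ⟨fun hh => hcon (hh ▸ hu), hu2⟩)⟩
  have hsideA : ∀ z ∈ S, ∃ u, H.Adj z u ∧ (P u ∧ ConnOn H P a u) := by
    intro z hz
    obtain ⟨w, hw⟩ := hmin z hz
    obtain ⟨u, h1, h2, h3⟩ := nbr_of_walk w hw (hzw_mem z hz w hw) (fun hh => haS (hh ▸ hz))
    exact ⟨u, h1, h2, h3⟩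
  have hsideB : ∀ z ∈ S, ∃ u, H.Adj z u ∧ (P u ∧ ConnOn H P b u) := by
    intro z hz
    obtain ⟨w, hw⟩ := hmin z hz
    have hw' : ∀ u ∈ w.reverse.support, u ∈ s ∧ u ∉ S.erase z := by
      intro u hu
      exact hw u (by rwa [SimpleGraph.Walk.support_reverse, List.mem_reverse] at hu)
    have hzw' : z ∈ w.reverse.support := by
      rw [SimpleGraph.Walk.support_reverse, List.mem_reverse]; exact hzw_mem z hz w hw
    obtain ⟨u, h1, h2, h3⟩ := nbr_of_walk w.reverse hw' hzw' (fun hh => hbS (hh ▸ hz))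
    exact ⟨u, h1, h2, h3⟩
  -- minimal path from x to y with interior on the c-side
  have main : ∀ (c : V), (∃ u, H.Adj x u ∧ (P u ∧ ConnOn H P c u)) →
      (∃ u, H.Adj y u ∧ (P u ∧ ConnOn H P c u)) →
      ∃ PA : H.Walk x y, PA.IsPath ∧
        (∀ z ∈ PA.support, z = x ∨ z = y ∨ (P z ∧ ConnOn H P c z)) ∧
        (∀ W : H.Walk x y, (∀ z ∈ W.support, z = x ∨ z = y ∨ (P z ∧ ConnOn H P c z)) →
          PA.length ≤ W.length) := by
    intro c ⟨zx, hxzx, hPzx, hczx⟩ ⟨zy, hyzy, hPzy, hczy⟩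
    obtain ⟨w1, hw1⟩ := hczx
    obtain ⟨w2, hw2⟩ := hczy
    set wmid : H.Walk zx zy := w1.reverse.append w2 with hwmid
    have hmid : ∀ u ∈ wmid.support, P u ∧ ConnOn H P c u := by
      intro u hu
      rw [hwmid, SimpleGraph.Walk.support_append] at hu
      rcases List.mem_append.1 hu with hu | hu
      · rw [SimpleGraph.Walk.support_reverse, List.mem_reverse] at hu
        exact ⟨hw1 u hu, connOn_of_mem_support w1 hw1 hu⟩
      · have hu' := List.mem_of_mem_tail hu
        exact ⟨hw2 u hu', connOn_of_mem_support w2 hw2 hu'⟩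
    set W0 : H.Walk x y := SimpleGraph.Walk.cons hxzx (wmid.concat hyzy.symm) with hW0
    have hCW0 : ∀ z ∈ W0.support, z = x ∨ z = y ∨ (P z ∧ ConnOn H P c z) := by
      intro z hz
      rw [hW0, SimpleGraph.Walk.support_cons, List.mem_cons] at hz
      rcases hz with rfl | hz
      · exact Or.inl rfl
      · rw [SimpleGraph.Walk.support_concat, List.mem_append] at hz
        rcases hz with hz | hz
        · exact Or.inr (Or.inr (hmid z hz))
        · rw [List.mem_singleton] at hz
          exact Or.inr (Or.inl hz)
    set SetN : Set ℕ := {n | ∃ W : H.Walk x y,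
      (∀ z ∈ W.support, z = x ∨ z = y ∨ (P z ∧ ConnOn H P c z)) ∧ W.length = n} with hSetN
    have hne : SetN.Nonempty := ⟨W0.length, W0, hCW0, rfl⟩
    obtain ⟨W1, hW1, hlen1⟩ := Nat.sInf_mem hne
    refine ⟨W1.bypass, W1.bypass_isPath, ?_, ?_⟩
    · intro z hz
      exact hW1 z (W1.support_bypass_subset hz)
    · intro W hW
      calc W1.bypass.length ≤ W1.length := W1.length_bypass_le
        _ = sInf SetN := hlen1
        _ ≤ W.length := Nat.sInf_le ⟨W, hW, rfl⟩
  obtain ⟨PA, hPApath, hPAsup, hPAmin⟩ := main a (hsideA x hx) (hsideA y hy)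
  obtain ⟨PB, hPBpath, hPBsup, hPBmin⟩ := main b (hsideB x hx) (hsideB y hy)
  -- lengths at least 2
  have hlen2 : ∀ (W : H.Walk x y), 2 ≤ W.length := by
    intro W
    rcases Nat.lt_or_ge W.length 2 with hl | hl
    · interval_cases hW : W.length
      · exact absurd (SimpleGraph.Walk.eq_of_length_eq_zero hW) hxy
      · exact absurd (length_eq_one_adj W hW) hnadj
    · exact hl
  -- common support vertices are x or y
  have hcommon : ∀ z, z ∈ PA.support → z ∈ PB.support → z = x ∨ z = y := by
    intro z h1 h2
    rcases hPAsup z h1 with rfl | rfl | hA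
    · exact Or.inl rfl
    · exact Or.inr rfl
    rcases hPBsup z h2 with rfl | rfl | hB
    · exact Or.inl rfl
    · exact Or.inr rfl
    exact (hsep (connOn_trans hA.2 (connOn_symm hB.2))).elim
  set C : H.Walk x x := PA.append PB.reverse with hC
  have hCsup : ∀ z ∈ C.support, z ∈ PA.support ∨ z ∈ PB.support := by
    intro z hz
    rw [hC, SimpleGraph.Walk.support_append, List.mem_append] at hz
    rcases hz with hz | hz
    · exact Or.inl hz
    · right
      have := List.mem_of_mem_tail hz
      rwa [SimpleGraph.Walk.support_reverse, List.mem_reverse] at this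
  have hedgeA : PA.edges ⊆ C.edges := by
    intro e he; rw [hC, SimpleGraph.Walk.edges_append, List.mem_append]; exact Or.inl he
  have hedgeB : PB.edges ⊆ C.edges := by
    intro e he; rw [hC, SimpleGraph.Walk.edges_append, List.mem_append]
    right; rwa [SimpleGraph.Walk.edges_reverse, List.mem_reverse]
  -- C is a cycle
  have hxPA : x ∉ PA.support.tail := by
    have := hPApath.support_nodup
    rw [PA.support_eq_cons, List.nodup_cons] at this
    exact this.1
  have hyPBr : y ∉ PB.reverse.support.tail := by
    have := hPBpath.reverse.support_nodup
    rw [PB.reverse.support_eq_cons, List.nodup_cons] at this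
    exact this.1
  have hcyc : C.IsCycle := by
    refine ⟨⟨⟨?_⟩, ?_⟩, ?_⟩
    · -- edges nodup
      rw [hC, SimpleGraph.Walk.edges_append, List.nodup_append]
      refine ⟨hPApath.isTrail.edges_nodup, hPBpath.reverse.isTrail.edges_nodup, ?_⟩
      intro e he1 e2 he2 hee
      rw [← hee] at he2
      clear hee e2
      rw [SimpleGraph.Walk.edges_reverse, List.mem_reverse] at he2
      revert he1 he2
      induction e using Sym2.ind with
      | _ c d =>
        intro he1 he2
        have hc1 := PA.fst_mem_support_of_mem_edges he1
        have hd1 := PA.snd_mem_support_of_mem_edges he1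
        have hc2 := PB.fst_mem_support_of_mem_edges he2
        have hd2 := PB.snd_mem_support_of_mem_edges he2
        have hadj := PA.adj_of_mem_edges he1
        rcases hcommon c hc1 hc2 with rfl | rfl
        · rcases hcommon d hd1 hd2 with rfl | rfl
          · exact H.irrefl hadj
          · exact hnadj hadj
        · rcases hcommon d hd1 hd2 with rfl | rfl
          · exact hnadj hadj.symm
          · exact H.irrefl hadj
    · -- not nil
      intro hnil
      have : C.length = 0 := by rw [hnil]; rfl
      rw [hC, SimpleGraph.Walk.length_append, SimpleGraph.Walk.length_reverse] at this
      have := hlen2 PA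
      omega
    · -- support tail nodup
      have htails : C.support.tail = PA.support.tail ++ PB.reverse.support.tail := by
        rw [hC, SimpleGraph.Walk.support_append]
        rw [PA.support_eq_cons]
        rfl
      rw [htails, List.nodup_append]
      refine ⟨?_, ?_, ?_⟩
      · have := hPApath.support_nodup
        rw [PA.support_eq_cons, List.nodup_cons] at this
        exact this.2
      · have := hPBpath.reverse.support_nodup
        rw [PB.reverse.support_eq_cons, List.nodup_cons] at this
        exact this.2
      · intro z hz1 z2 hz2 hzz
        rw [← hzz] at hz2
        clear hzz z2
        have hz1' : z ∈ PA.support := List.mem_of_mem_tail hz1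
        have hz2' : z ∈ PB.support := by
          have := List.mem_of_mem_tail hz2
          rwa [SimpleGraph.Walk.support_reverse, List.mem_reverse] at this
        rcases hcommon z hz1' hz2' with rfl | rfl
        · exact hxPA hz1
        · exact hyPBr hz2
  have hlen4 : 4 ≤ C.length := by
    have h1 := hlen2 PA
    have h2 := hlen2 PB
    rw [hC, SimpleGraph.Walk.length_append, SimpleGraph.Walk.length_reverse]
    omega
  obtain ⟨u, v, hu, hv, hadj, hne⟩ := hch C hcyc hlen4
  -- chord case analysis
  have caseA : ∀ u v, u ∈ PA.support → v ∈ PA.support → H.Adj u v → s(u, v) ∉ C.edges → False := by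
    intro u v hu hv hadj hne
    obtain ⟨W, hWsup, hWlen⟩ := shortcut PA u v hu hv hadj (fun hh => hne (hedgeA hh))
    have := hPAmin W (fun z hz => hPAsup z (hWsup z hz))
    omega
  have caseB : ∀ u v, u ∈ PB.support → v ∈ PB.support → H.Adj u v → s(u, v) ∉ C.edges → False := by
    intro u v hu hv hadj hne
    obtain ⟨W, hWsup, hWlen⟩ := shortcut PB u v hu hv hadj (fun hh => hne (hedgeB hh))
    have := hPBmin W (fun z hz => hPBsup z (hWsup z hz))
    omega
  have caseMix : ∀ u v, u ∈ PA.support → v ∈ PB.support → H.Adj u v → s(u, v) ∉ C.edges → False := by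
    intro u v hu hv hadj hne
    by_cases huB : u ∈ PB.support
    · exact caseB u v huB hv hadj hne
    by_cases hvA : v ∈ PA.support
    · exact caseA u v hu hvA hadj hne
    have hAu : P u ∧ ConnOn H P a u := by
      rcases hPAsup u hu with rfl | rfl | h
      · exact absurd PB.start_mem_support huB
      · exact absurd PB.end_mem_support huB
      · exact h
    have hBv : P v ∧ ConnOn H P b v := by
      rcases hPBsup v hv with rfl | rfl | h
      · exact absurd PA.start_mem_support hvA
      · exact absurd PA.end_mem_support hvA
      · exact h
    exact hnoedge u v hAu hBv hadj
  rcases hCsup u hu with huA | huB <;> rcases hCsup v hv with hvA | hvB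
  · exact caseA u v huA hvA hadj hne
  · exact caseMix u v huA hvB hadj hne
  · exact caseMix v u hvA huB hadj.symm (by rwa [Sym2.eq_swap])
  · exact caseB u v huB hvB hadj hne


theorem dirac_aux (hch : IsChordal H) :
    ∀ n (s : Finset V), s.card ≤ n →
      (∀ x ∈ s, ∀ y ∈ s, x ≠ y → H.Adj x y) ∨
      ∃ v ∈ s, ∃ w ∈ s, v ≠ w ∧ ¬H.Adj v w ∧ SimpIn H v s ∧ SimpIn H w s := by
  intro n
  induction n with
  | zero =>
    intro s hs
    left
    intro x hx
    have : s = ∅ := Finset.card_eq_zero.1 (Nat.le_zero.1 hs)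
    simp [this] at hx
  | succ n ih =>
    intro s hs
    by_cases hcl : ∀ x ∈ s, ∀ y ∈ s, x ≠ y → H.Adj x y
    · exact Or.inl hcl
    right
    push_neg at hcl
    obtain ⟨a, has, b, hbs, hab, hnadj⟩ := hcl
    classical
    -- the family of separators
    set T0 : Finset V := (s.erase a).erase b with hT0
    have hT0mem : ∀ z, z ∈ s → z ∉ T0 → z = a ∨ z = b := by
      intro z hz hzT
      rw [hT0, Finset.mem_erase, Finset.mem_erase] at hzT
      push_neg at hzT
      by_cases h1 : z = b
      · exact Or.inr h1
      · exact Or.inl (by simpa [hz] using hzT h1)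
    have hT0sep : ¬ ConnOn H (fun z => z ∈ s ∧ z ∉ T0) a b := by
      rintro ⟨w, hw⟩
      cases w with
      | nil => exact hab rfl
      | @cons _ c _ h w' =>
        have hc : c ∈ (SimpleGraph.Walk.cons h w').support := by
          rw [SimpleGraph.Walk.support_cons]
          exact List.mem_cons_of_mem _ w'.start_mem_support
        obtain ⟨hcs, hcT⟩ := hw c hc
        rcases hT0mem c hcs hcT with rfl | rfl
        · exact H.irrefl h
        · exact hnadj h
    set Sep : Set ℕ := {m | ∃ T : Finset V, T ⊆ T0 ∧
      ¬ ConnOn H (fun z => z ∈ s ∧ z ∉ T) a b ∧ T.card = m} with hSep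
    have hSepne : Sep.Nonempty := ⟨T0.card, T0, Finset.Subset.refl _, hT0sep, rfl⟩
    obtain ⟨S, hST0, hSsep, hScard⟩ := Nat.sInf_mem hSepne
    have hSmin : ∀ x ∈ S, ConnOn H (fun z => z ∈ s ∧ z ∉ S.erase x) a b := by
      intro x hxS
      by_contra hcon
      have hmem : (S.erase x).card ∈ Sep :=
        ⟨S.erase x, (Finset.erase_subset _ _).trans hST0, hcon, rfl⟩
      have h2 := Nat.sInf_le hmem
      have h3 := Finset.card_erase_lt_of_mem hxS
      omega
    have haT0 : a ∉ T0 := by rw [hT0]; simp [Finset.mem_erase]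
    have hbT0 : b ∉ T0 := by rw [hT0]; simp [Finset.mem_erase]
    have haS : a ∉ S := fun h => haT0 (hST0 h)
    have hbS : b ∉ S := fun h => hbT0 (hST0 h)
    have hSs : S ⊆ s := hST0.trans ((Finset.erase_subset _ _).trans (Finset.erase_subset _ _))
    have hScl : ∀ x ∈ S, ∀ y ∈ S, x ≠ y → H.Adj x y := fun x hx y hy hne =>
      sep_clique hch s S a b haS hbS hSsep hSmin hx hy hne
    -- one simplicial vertex on each side
    have side : ∀ c d : V, c ∈ s → d ∈ s → c ∉ S → d ∉ S →
        (¬ ConnOn H (fun z => z ∈ s ∧ z ∉ S) c d) →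
        ∃ v, v ∈ s ∧ v ∉ S ∧ ConnOn H (fun z => z ∈ s ∧ z ∉ S) c v ∧ SimpIn H v s := by
      intro c d hcs hds hcS hdS hsep
      set Aset : Finset V := s.filter (fun z => z ∉ S ∧ ConnOn H (fun u => u ∈ s ∧ u ∉ S) c z)
        with hAset
      have hAmem : ∀ z, z ∈ Aset ↔ z ∈ s ∧ z ∉ S ∧ ConnOn H (fun u => u ∈ s ∧ u ∉ S) c z := by
        intro z
        rw [hAset, Finset.mem_filter]
      set s' : Finset V := Aset ∪ S with hs'
      have hcA : c ∈ Aset := (hAmem c).2 ⟨hcs, hcS, connOn_refl ⟨hcs, hcS⟩⟩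
      have hsub : s' ⊆ s := by
        rw [hs']
        intro z hz
        rcases Finset.mem_union.1 hz with hz | hz
        · exact ((hAmem z).1 hz).1
        · exact hSs hz
      have hds' : d ∉ s' := by
        rw [hs']
        intro hz
        rcases Finset.mem_union.1 hz with hz | hz
        · exact hsep (connOn_symm (connOn_symm ((hAmem d).1 hz).2.2))
        · exact hdS hz
      have hcard : s'.card ≤ n := by
        have h1 : s' ⊂ s := ⟨hsub, fun hss => hds' (hss hds)⟩
        have := Finset.card_lt_card h1
        omega
      -- all neighbors (in s) of an Aset vertex are in s'
      have hnbr : ∀ v ∈ Aset, ∀ u ∈ s, H.Adj v u → u ∈ s' := by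
        intro v hv u hu hadj
        by_cases huS : u ∈ S
        · exact Finset.mem_union.2 (Or.inr huS)
        · refine Finset.mem_union.2 (Or.inl ((hAmem u).2 ⟨hu, huS, ?_⟩))
          obtain ⟨hvs, hvS, hvconn⟩ := (hAmem v).1 hv
          exact connOn_trans hvconn (connOn_adj hadj ⟨hvs, hvS⟩ ⟨hu, huS⟩)
      rcases ih s' hcard with hclique | ⟨v, hv, w, hw, hvw, hnvw, hsv, hsw⟩
      · refine ⟨c, hcs, hcS, connOn_refl ⟨hcs, hcS⟩, ?_⟩
        intro u1 h1 u2 h2 ha1 ha2 hne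
        exact hclique u1 (hnbr c hcA u1 h1 ha1) u2 (hnbr c hcA u2 h2 ha2) hne
      · have use_one : ∀ v, v ∈ s' → v ∉ S → SimpIn H v s' →
            ∃ v, v ∈ s ∧ v ∉ S ∧ ConnOn H (fun z => z ∈ s ∧ z ∉ S) c v ∧ SimpIn H v s := by
          intro v hv hvS hsimp
          have hvA : v ∈ Aset := by
            rcases Finset.mem_union.1 hv with h | h
            · exact h
            · exact absurd h hvS
          obtain ⟨hvs, _, hvconn⟩ := (hAmem v).1 hvA
          refine ⟨v, hvs, hvS, hvconn, ?_⟩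
          intro u1 h1 u2 h2 ha1 ha2 hne
          exact hsimp u1 (hnbr v hvA u1 h1 ha1) u2 (hnbr v hvA u2 h2 ha2) ha1 ha2 hne
        by_cases hvS : v ∈ S
        · have hwS : w ∉ S := fun hwS => hnvw (hScl v hvS w hwS hvw)
          exact use_one w hw hwS hsw
        · exact use_one v hv hvS hsv
    obtain ⟨va, hvas, hvaS, hconna, hsimpa⟩ := side a b has hbs haS hbS hSsep
    have hSsep' : ¬ ConnOn H (fun z => z ∈ s ∧ z ∉ S) b a := fun h => hSsep (connOn_symm h)
    obtain ⟨vb, hvbs, hvbS, hconnb, hsimpb⟩ := side b a hbs has hbS haS hSsep'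
    have hne : va ≠ vb := by
      rintro rfl
      exact hSsep (connOn_trans hconna (connOn_symm hconnb))
    have hnadj2 : ¬ H.Adj va vb := by
      intro hadj
      refine hSsep (connOn_trans hconna ?_)
      refine connOn_trans (connOn_adj hadj ?_ ?_) (connOn_symm hconnb)
      · obtain ⟨w, hw⟩ := hconna
        exact hw va w.end_mem_support
      · obtain ⟨w, hw⟩ := hconnb
        exact hw vb w.end_mem_support
    exact ⟨va, hvas, vb, hvbs, hne, hnadj2, hsimpa, hsimpb⟩

theorem exists_simplicial (hch : IsChordal H) (s : Finset V) (hs : s.Nonempty) :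
    ∃ v ∈ s, SimpIn H v s := by
  rcases dirac_aux hch s.card s le_rfl with hcl | ⟨v, hv, _, _, _, _, hsimp, _⟩
  · obtain ⟨v, hv⟩ := hs
    exact ⟨v, hv, fun u1 h1 u2 h2 _ _ hne => hcl u1 h1 u2 h2 hne⟩
  · exact ⟨v, hv, hsimp⟩


theorem assign (hch : IsChordal H) (l : V → ℕ)
    (hstar : ∀ K : Finset V, (∀ x ∈ K, ∀ y ∈ K, x ≠ y → H.Adj x y) →
      ∀ v ∈ K, K.card ≤ 2 ^ l v) :
    ∀ n (s : Finset V), s.card ≤ n → ∃ a : V → ℕ,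
      (∀ v ∈ s, a v < 2 ^ l v) ∧
      (∀ u ∈ s, ∀ v ∈ s, u ≠ v → H.Adj u v →
        a u % 2 ^ min (l u) (l v) ≠ a v % 2 ^ min (l u) (l v)) := by
  intro n
  induction n with
  | zero =>
    intro s hs
    have : s = ∅ := Finset.card_eq_zero.1 (Nat.le_zero.1 hs)
    subst this
    exact ⟨fun _ => 0, fun v hv => absurd hv (by simp), fun u hu => absurd hu (by simp)⟩
  | succ n ih =>
    intro s hs
    rcases s.eq_empty_or_nonempty with rfl | hne
    · exact ⟨fun _ => 0, fun v hv => absurd hv (by simp), fun u hu => absurd hu (by simp)⟩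
    classical
    obtain ⟨v, hvs, hsimp⟩ := exists_simplicial hch s hne
    set s' : Finset V := s.erase v with hs'
    have hcard : s'.card ≤ n := by
      have hce : s'.card = s.card - 1 := by rw [hs']; exact Finset.card_erase_of_mem hvs
      have hpos : 0 < s.card := Finset.card_pos.2 hne
      omega
    obtain ⟨a, h1, h2⟩ := ih s' hcard
    set N : Finset V := s'.filter (fun u => H.Adj v u) with hN
    have hNmem : ∀ u, u ∈ N ↔ u ∈ s' ∧ H.Adj v u := by
      intro u; rw [hN, Finset.mem_filter]
    have hvN : v ∉ N := by
      intro h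
      exact (Finset.notMem_erase v s) ((hNmem v).1 h).1
    have hKcl : ∀ x ∈ insert v N, ∀ y ∈ insert v N, x ≠ y → H.Adj x y := by
      intro x hx y hy hne'
      rcases Finset.mem_insert.1 hx with rfl | hx
      · rcases Finset.mem_insert.1 hy with rfl | hy
        · exact absurd rfl hne'
        · exact ((hNmem y).1 hy).2
      · rcases Finset.mem_insert.1 hy with rfl | hy
        · exact (((hNmem x).1 hx).2).symm
        · obtain ⟨hx1, hx2⟩ := (hNmem x).1 hx
          obtain ⟨hy1, hy2⟩ := (hNmem y).1 hy
          exact hsimp x (Finset.erase_subset _ _ hx1) y (Finset.erase_subset _ _ hy1) hx2 hy2 hne'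
    have hKcard : (insert v N).card = N.card + 1 := Finset.card_insert_of_notMem hvN
    have hKbound : ∀ u ∈ insert v N, N.card + 1 ≤ 2 ^ l u := by
      intro u hu
      rw [← hKcard]
      exact hstar (insert v N) hKcl u hu
    have hminbound : ∀ u ∈ N, N.card + 1 ≤ 2 ^ min (l u) (l v) := by
      intro u hu
      rcases le_total (l u) (l v) with h | h
      · rw [min_eq_left h]
        exact hKbound u (Finset.mem_insert_of_mem hu)
      · rw [min_eq_right h]
        exact hKbound v (Finset.mem_insert_self _ _)
    set F : Finset ℕ := N.biUnion (fun u => (Finset.range (2 ^ l v)).filter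
      (fun t => t % 2 ^ min (l u) (l v) = a u % 2 ^ min (l u) (l v))) with hF
    have hpos : 0 < 2 ^ l v := Nat.pow_pos (by norm_num)
    have hFcard : F.card < 2 ^ l v := by
      have hcardle : ∀ u ∈ N, ((Finset.range (2 ^ l v)).filter
          (fun t => t % 2 ^ min (l u) (l v) = a u % 2 ^ min (l u) (l v))).card
          ≤ 2 ^ (l v - min (l u) (l v)) := by
        intro u hu
        have hm : min (l u) (l v) ≤ l v := min_le_right _ _
        have hmpos : 0 < 2 ^ min (l u) (l v) := Nat.pow_pos (by norm_num)
        have := Finset.card_le_card_of_injOn (fun t => t / 2 ^ min (l u) (l v))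
          (s := (Finset.range (2 ^ l v)).filter
            (fun t => t % 2 ^ min (l u) (l v) = a u % 2 ^ min (l u) (l v)))
          (t := Finset.range (2 ^ (l v - min (l u) (l v))))
          ?_ ?_
        · simpa using this
        · intro t ht
          rw [Finset.mem_coe, Finset.mem_filter, Finset.mem_range] at ht
          simp only [Finset.mem_coe, Finset.mem_range]
          rw [Nat.div_lt_iff_lt_mul hmpos, ← pow_add, Nat.sub_add_cancel hm]
          exact ht.1
        · intro t1 ht1 t2 ht2 hdiv
          simp only [Finset.coe_filter, Set.mem_setOf_eq, Finset.mem_range] at ht1 ht2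
          have hdiv' : t1 / 2 ^ min (l u) (l v) = t2 / 2 ^ min (l u) (l v) := hdiv
          have e1 := Nat.div_add_mod t1 (2 ^ min (l u) (l v))
          have e2 := Nat.div_add_mod t2 (2 ^ min (l u) (l v))
          rw [ht1.2] at e1
          rw [ht2.2] at e2
          rw [hdiv'] at e1
          omega
      have h3 : (N.card + 1) * F.card ≤ N.card * 2 ^ l v := by
        calc (N.card + 1) * F.card
            ≤ (N.card + 1) * ∑ u ∈ N, ((Finset.range (2 ^ l v)).filter
              (fun t => t % 2 ^ min (l u) (l v) = a u % 2 ^ min (l u) (l v))).card :=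
              Nat.mul_le_mul_left _ Finset.card_biUnion_le
          _ = ∑ u ∈ N, (N.card + 1) * ((Finset.range (2 ^ l v)).filter
              (fun t => t % 2 ^ min (l u) (l v) = a u % 2 ^ min (l u) (l v))).card :=
              Finset.mul_sum _ _ _
          _ ≤ ∑ u ∈ N, 2 ^ l v := by
              refine Finset.sum_le_sum ?_
              intro u hu
              calc (N.card + 1) * ((Finset.range (2 ^ l v)).filter
                  (fun t => t % 2 ^ min (l u) (l v) = a u % 2 ^ min (l u) (l v))).card
                  ≤ 2 ^ min (l u) (l v) * 2 ^ (l v - min (l u) (l v)) :=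
                    Nat.mul_le_mul (hminbound u hu) (hcardle u hu)
                _ = 2 ^ l v := by rw [← pow_add, Nat.add_sub_cancel' (min_le_right _ _)]
          _ = N.card * 2 ^ l v := by rw [Finset.sum_const, smul_eq_mul]
      by_contra hcon
      push_neg at hcon
      have h4 : (N.card + 1) * 2 ^ l v ≤ (N.card + 1) * F.card := Nat.mul_le_mul_left _ hcon
      have h5 : (N.card + 1) * 2 ^ l v = N.card * 2 ^ l v + 2 ^ l v := by ring
      omega
    have hnsub : ¬ (Finset.range (2 ^ l v) ⊆ F) := by
      intro hsub
      have := Finset.card_le_card hsub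
      rw [Finset.card_range] at this
      omega
    obtain ⟨x, hxr, hxF⟩ := Finset.not_subset.1 hnsub
    rw [Finset.mem_range] at hxr
    have hxgood : ∀ u ∈ N, x % 2 ^ min (l u) (l v) ≠ a u % 2 ^ min (l u) (l v) := by
      intro u hu heq
      exact hxF (Finset.mem_biUnion.2 ⟨u, hu, Finset.mem_filter.2
        ⟨Finset.mem_range.2 hxr, heq⟩⟩)
    refine ⟨Function.update a v x, ?_, ?_⟩
    · intro u hu
      by_cases huv : u = v
      · subst huv; rw [Function.update_self]; exact hxr
      · rw [Function.update_of_ne huv]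
        exact h1 u (Finset.mem_erase.2 ⟨huv, hu⟩)
    · intro u hu w hw hne' hadj
      by_cases huv : u = v
      · subst huv
        have hwv : w ≠ u := fun h => hne' h.symm
        have hwN : w ∈ N := (hNmem w).2 ⟨Finset.mem_erase.2 ⟨hwv, hw⟩, hadj⟩
        rw [Function.update_self, Function.update_of_ne hwv]
        rw [min_comm (l u) (l w)]
        exact hxgood w hwN
      · by_cases hwv : w = v
        · subst hwv
          have huN : u ∈ N := (hNmem u).2 ⟨Finset.mem_erase.2 ⟨huv, hu⟩, hadj.symm⟩
          rw [Function.update_self, Function.update_of_ne huv]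
          exact (hxgood u huN).symm
        · rw [Function.update_of_ne huv, Function.update_of_ne hwv]
          exact h2 u (Finset.mem_erase.2 ⟨huv, hu⟩) w (Finset.mem_erase.2 ⟨hwv, hw⟩) hne' hadj


end CollisionFreeAux

/-- Suppose `G²` is chordal, and for each station `r` let `c r` be the maximum
cardinality of a clique of `G²` containing `r`. If each station `r` uses states of
length `l_r = ⌈log₂ (c r)⌉`, then a collision-free configuration exists: an
assignment `X` of binary strings of these lengths such that for every pair of
distinct stations within two hops of each other, neither of their states is a prefix
of the other. -/
theorem chordalSquare_collisionFree_exists {V : Type*} [Fintype V] [DecidableEq V]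
    (G : SimpleGraph V) [DecidableRel G.Adj]
    (hchordal : IsChordal (graphSquare G))
    (c : V → ℕ)
    (hc : ∀ r : V, IsGreatest
      {n : ℕ | ∃ s : Finset V, (graphSquare G).IsClique (↑s : Set V) ∧ r ∈ s ∧ s.card = n}
      (c r)) :
    ∃ X : V → List Bool,
      (∀ r : V, (X r).length = Nat.clog 2 (c r)) ∧
      ∀ r r' : V, r ≠ r' → (G.Adj r r' ∨ ∃ z, G.Adj r z ∧ G.Adj z r') →
        ¬ X r <+: X r' ∧ ¬ X r' <+: X r := by
  set H : SimpleGraph V := graphSquare G with hH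
  set l : V → ℕ := fun r => Nat.clog 2 (c r) with hl
  have hstar : ∀ K : Finset V, (∀ x ∈ K, ∀ y ∈ K, x ≠ y → H.Adj x y) →
      ∀ v ∈ K, K.card ≤ 2 ^ l v := by
    intro K hK v hv
    have hKclique : H.IsClique (↑K : Set V) := by
      intro x hx y hy hxy
      exact hK x hx y hy hxy
    have h1 : K.card ≤ c v := (hc v).2 ⟨K, hKclique, hv, rfl⟩
    exact h1.trans (Nat.le_pow_clog (by norm_num) _)
  obtain ⟨a, ha1, ha2⟩ := assign hchordal l hstar (Finset.univ.card) Finset.univ le_rfl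
  set X : V → List Bool := fun r => (List.range (l r)).map (a r).testBit with hX
  have hlen : ∀ r, (X r).length = l r := by
    intro r; rw [hX]; simp
  have key : ∀ u w : V, u ≠ w → H.Adj u w → ¬ (X u <+: X w) := by
    intro u w hne hadj hpre
    have hlenle : l u ≤ l w := by
      have := hpre.length_le
      rwa [hlen, hlen] at this
    obtain ⟨t, ht⟩ := hpre
    have hmod : a u % 2 ^ l u = a w % 2 ^ l u := by
      apply Nat.eq_of_testBit_eq
      intro i
      rw [Nat.testBit_mod_two_pow, Nat.testBit_mod_two_pow]
      by_cases hi : i < l u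
      · have hiw0 : i < l w := lt_of_lt_of_le hi hlenle
        have hiu : i < (X u).length := by rw [hlen]; exact hi
        have hiw : i < (X w).length := by rw [hlen]; exact hiw0
        have e1 : (X u)[i]'hiu = (a u).testBit i := by
          simp [hX]
        have e2 : (X w)[i]'hiw = (a w).testBit i := by
          simp [hX]
        have e3 : (X w)[i]? = (X u)[i]? := by
          conv_lhs => rw [← ht]
          exact List.getElem?_append_left hiu
        rw [List.getElem?_eq_getElem hiw, List.getElem?_eq_getElem hiu] at e3
        have e4 : (X w)[i]'hiw = (X u)[i]'hiu := by
          exact Option.some.inj e3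
        simp only [hi, hiw0, decide_eq_true_eq, Bool.true_and]
        rw [← e1, ← e2, e4]
      · simp [hi]
    have := ha2 u (Finset.mem_univ u) w (Finset.mem_univ w) hne hadj
    rw [min_eq_left hlenle] at this
    exact this hmod
  refine ⟨X, fun r => hlen r, ?_⟩
  intro r r' hne hadj
  have hadj' : H.Adj r r' := ⟨hne, hadj⟩
  exact ⟨key r r' hne hadj', key r' r hne.symm hadj'.symm⟩
end

section
/- For every real number μ > 0, the function ρ(p) = μ·p·(1-p)·e^{-μp} on the interval [0,1] attains its maximum at p* = 2/(2 + μ + √(4 + μ²)); that is, ρ(p) ≤ ρ(p*) for all p ∈ [0,1], and moreover ρ(p*) = (μ/(2 + √(4 + μ²))) · exp(-2μ/(2 + μ + √(4 + μ²))). -/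
/-- For every `μ > 0`, the function `ρ(p) = μ·p·(1-p)·e^{-μp}` on `[0,1]` attains its
maximum at `p* = 2/(2 + μ + √(4 + μ²))`, and
`ρ(p*) = (μ/(2 + √(4 + μ²))) · exp(-2μ/(2 + μ + √(4 + μ²)))`. -/
theorem slottedAloha_optimal_p (μ : ℝ) (hμ : 0 < μ) :
    (∀ p ∈ Set.Icc (0 : ℝ) 1,
        μ * p * (1 - p) * Real.exp (-(μ * p)) ≤
          μ * (2 / (2 + μ + Real.sqrt (4 + μ ^ 2))) *
            (1 - 2 / (2 + μ + Real.sqrt (4 + μ ^ 2))) *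
            Real.exp (-(μ * (2 / (2 + μ + Real.sqrt (4 + μ ^ 2)))))) ∧
    μ * (2 / (2 + μ + Real.sqrt (4 + μ ^ 2))) *
        (1 - 2 / (2 + μ + Real.sqrt (4 + μ ^ 2))) *
        Real.exp (-(μ * (2 / (2 + μ + Real.sqrt (4 + μ ^ 2))))) =
      (μ / (2 + Real.sqrt (4 + μ ^ 2))) *
        Real.exp (-(2 * μ) / (2 + μ + Real.sqrt (4 + μ ^ 2))) := by
  set s := Real.sqrt (4 + μ ^ 2) with hsdef
  have hs0 : 0 ≤ s := Real.sqrt_nonneg _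
  have hs2 : s ^ 2 = 4 + μ ^ 2 := Real.sq_sqrt (by positivity)
  have hsμ : μ < s := by nlinarith
  have hA : 0 < 2 + μ + s := by linarith
  set q : ℝ := 2 / (2 + μ + s) with hqdef
  have hq0 : 0 < q := by positivity
  have hq1 : q < 1 := by
    rw [hqdef, div_lt_one hA]; linarith
  have hroot : μ * q ^ 2 - (2 + μ) * q + 1 = 0 := by
    rw [hqdef]
    field_simp
    nlinarith [hs2]
  have hqq : 0 ≤ μ * q * (1 - q) := by
    have : 0 ≤ 1 - q := by linarith
    positivity
  constructor
  · intro p hp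
    have hx : 1 + μ * (p - q) ≤ Real.exp (μ * (p - q)) := by
      have := Real.add_one_le_exp (μ * (p - q)); linarith
    have hexp : Real.exp (-(μ * q)) = Real.exp (μ * (p - q)) * Real.exp (-(μ * p)) := by
      rw [← Real.exp_add]; ring_nf
    have key : μ * q * (1 - q) * (1 + μ * (p - q)) - μ * p * (1 - p) = μ * (p - q) ^ 2 := by
      linear_combination (μ * (q - p)) * hroot
    have h1 : μ * p * (1 - p) ≤ μ * q * (1 - q) * (1 + μ * (p - q)) := by
      nlinarith [sq_nonneg (p - q)]
    have hep : (0 : ℝ) < Real.exp (-(μ * p)) := Real.exp_pos _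
    calc μ * p * (1 - p) * Real.exp (-(μ * p))
        ≤ μ * q * (1 - q) * (1 + μ * (p - q)) * Real.exp (-(μ * p)) :=
          mul_le_mul_of_nonneg_right h1 hep.le
      _ ≤ μ * q * (1 - q) * Real.exp (μ * (p - q)) * Real.exp (-(μ * p)) := by
          have := mul_le_mul_of_nonneg_left hx hqq
          exact mul_le_mul_of_nonneg_right this hep.le
      _ = μ * q * (1 - q) * Real.exp (-(μ * q)) := by rw [hexp]; ring
  · have h2s : (0 : ℝ) < 2 + s := by linarith
    have hcoef : μ * q * (1 - q) = μ / (2 + s) := by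
      rw [hqdef]
      field_simp
      nlinarith [hs2]
    have harg : -(μ * q) = -(2 * μ) / (2 + μ + s) := by
      rw [hqdef]; ring
    rw [hcoef, harg]
end

section
/- Let G be a finite simple graph with multicast sessions, and let X be a collision-free multicast configuration in which station r's state has length l_r. Then for every station r with M_r ≠ ∅ and every link a ∈ M_r, letting I_a = { r' : M_{r'} ∩ (L_a ∪ {a}) ≠ ∅ } be the set of stations whose session uses a link in the one-hop link-neighborhood of a, the states { X_{r'} : r' ∈ I_a } are pairwise non-prefix (for distinct r', r'' ∈ I_a, neither X_{r'} nor X_{r''} is a prefix of the other), and the sum over r' ∈ I_a of 2^{-l_{r'}} is at most 1. In particular, if all stations in I_a use states of the same length l, then 2^l ≥ |I_a|. -/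
/-- Two directed links are one-hop link-peers if they are distinct and the
transmitter of one equals the receiver of the other. -/
def linkPeer {V : Type*} (a b : V × V) : Prop :=
  a ≠ b ∧ (a.1 = b.2 ∨ a.2 = b.1)

instance {V : Type*} [DecidableEq V] (a b : V × V) : Decidable (linkPeer a b) :=
  inferInstanceAs (Decidable (a ≠ b ∧ (a.1 = b.2 ∨ a.2 = b.1)))

/-- `b ∈ L²_a`: the link `b` is reachable from `a` in at most two steps of the
link-peer relation (via a genuine directed link of `G` as intermediate step). -/
def inL2 {V : Type*} (G : SimpleGraph V) (a b : V × V) : Prop :=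
  linkPeer a b ∨ ∃ c : V × V, G.Adj c.1 c.2 ∧ linkPeer a c ∧ linkPeer c b

/-- The multicast session of station `r`: the set of directed links
`M_r = {(r, r') : r' ∈ D_r}`. -/
def sessionM {V : Type*} [DecidableEq V] (D : V → Finset V) (r : V) : Finset (V × V) :=
  (D r).image fun r' => (r, r')

/-- `I_a = { r' : M_{r'} ∩ (L_a ∪ {a}) ≠ ∅ }`: the stations whose session uses a link
in the one-hop link-neighborhood of `a` (or `a` itself). -/
def Ilink {V : Type*} [Fintype V] [DecidableEq V] (D : V → Finset V) (a : V × V) :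
    Finset V :=
  Finset.univ.filter fun r' => ∃ b ∈ sessionM D r', b = a ∨ linkPeer a b

lemma prefix_comparable {v w w' : List Bool} (h : w <+: v) (h' : w' <+: v) :
    w <+: w' ∨ w' <+: w := by
  rw [List.prefix_iff_eq_take] at h h'
  rcases le_total w.length w'.length with hl | hl
  · left
    have : w = w'.take w.length := by
      conv_lhs => rw [h]
      rw [h', List.take_take, min_eq_left hl]
    rw [this]; exact List.take_prefix _ _
  · right
    have : w' = w.take w'.length := by
      conv_lhs => rw [h']
      rw [h, List.take_take, min_eq_left hl]
    rw [this]; exact List.take_prefix _ _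

lemma kraft_aux_s9 (S : Finset (List Bool))
    (h : ∀ x ∈ S, ∀ y ∈ S, x ≠ y → ¬ x <+: y) :
    ∑ x ∈ S, ((2:ℝ) ^ x.length)⁻¹ ≤ 1 := by
  classical
  set n := S.sup List.length with hn
  have hlen : ∀ x ∈ S, x.length ≤ n := fun x hx => Finset.le_sup hx
  set ext : List Bool → Finset (List Bool) := fun w =>
    (Finset.univ : Finset (Fin (n - w.length) → Bool)).image fun f => w ++ List.ofFn f
    with hext
  have hmem : ∀ w v, v ∈ ext w → w <+: v := by
    intro w v hv
    simp only [hext, Finset.mem_image] at hv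
    obtain ⟨f, _, rfl⟩ := hv
    exact ⟨_, rfl⟩
  have hcard : ∀ w, (ext w).card = 2 ^ (n - w.length) := by
    intro w
    rw [hext]
    rw [Finset.card_image_of_injective _ fun f g hfg =>
      List.ofFn_injective (List.append_cancel_left hfg)]
    simp
  have hdisj : ∀ x ∈ S, ∀ y ∈ S, x ≠ y → Disjoint (ext x) (ext y) := by
    intro x hx y hy hxy
    rw [Finset.disjoint_left]
    intro v hvx hvy
    rcases prefix_comparable (hmem x v hvx) (hmem y v hvy) with hp | hp
    · exact h x hx y hy hxy hp
    · exact h y hy x hx (Ne.symm hxy) hp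
  have hsub : S.biUnion ext ⊆ (Finset.univ : Finset (Fin n → Bool)).image List.ofFn := by
    intro v hv
    rw [Finset.mem_biUnion] at hv
    obtain ⟨w, hw, hvw⟩ := hv
    simp only [hext, Finset.mem_image] at hvw
    obtain ⟨f, _, rfl⟩ := hvw
    have hL : (w ++ List.ofFn f).length = n := by
      simp [Nat.add_sub_cancel' (hlen w hw)]
    refine Finset.mem_image.2 ⟨fun i => (w ++ List.ofFn f).get (Fin.cast hL.symm i),
      Finset.mem_univ _, ?_⟩
    apply List.ext_getElem
    · simp [hL]
    · intro i h1 h2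
      simp [List.getElem_ofFn]
  have hnatsum : ∑ x ∈ S, 2 ^ (n - x.length) ≤ 2 ^ n := by
    calc ∑ x ∈ S, 2 ^ (n - x.length) = ∑ x ∈ S, (ext x).card := by
          exact Finset.sum_congr rfl fun x _ => (hcard x).symm
      _ = (S.biUnion ext).card := (Finset.card_biUnion hdisj).symm
      _ ≤ ((Finset.univ : Finset (Fin n → Bool)).image List.ofFn).card :=
          Finset.card_le_card hsub
      _ ≤ 2 ^ n := by
          rw [Finset.card_image_of_injective _ List.ofFn_injective]
          simp
  have key : ∀ x ∈ S, ((2:ℝ) ^ x.length)⁻¹ = (2:ℝ) ^ (n - x.length) / 2 ^ n := by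
    intro x hx
    rw [eq_div_iff (by positivity), inv_mul_eq_div, div_eq_iff (by positivity),
      ← pow_add, Nat.sub_add_cancel (hlen x hx)]
  calc ∑ x ∈ S, ((2:ℝ) ^ x.length)⁻¹ = ∑ x ∈ S, (2:ℝ) ^ (n - x.length) / 2 ^ n :=
        Finset.sum_congr rfl key
    _ = (∑ x ∈ S, (2:ℝ) ^ (n - x.length)) / 2 ^ n := by rw [Finset.sum_div]
    _ ≤ (2:ℝ) ^ n / 2 ^ n := by
        apply div_le_div_of_nonneg_right ?_ (by positivity)
        · exact_mod_cast (by exact_mod_cast hnatsum : ((∑ x ∈ S, 2 ^ (n - x.length) : ℕ) : ℝ) ≤ ((2 ^ n : ℕ) : ℝ))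
    _ = 1 := by rw [div_self (by positivity)]

lemma linkPeer_symm {V : Type*} {a b : V × V} (h : linkPeer a b) : linkPeer b a :=
  ⟨h.1.symm, h.2.symm.imp Eq.symm Eq.symm⟩


/-- Let `X` be a collision-free multicast configuration. Then for every station `r`
with `M_r ≠ ∅` and every link `a ∈ M_r`, the states of the stations in `I_a` are
pairwise non-prefix, and `∑_{r' ∈ I_a} 2^{-l_{r'}} ≤ 1`; in particular if all
stations in `I_a` use states of the same length `l`, then `2^l ≥ |I_a|`. -/
theorem multicast_collisionFree_kraft {V : Type*} [Fintype V] [DecidableEq V]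
    (G : SimpleGraph V) [DecidableRel G.Adj]
    (D : V → Finset V) (hD : ∀ r : V, D r ⊆ G.neighborFinset r)
    (X : V → List Bool)
    (hcf : ∀ r r' : V, r ≠ r' → ∀ a ∈ sessionM D r, ∀ a' ∈ sessionM D r',
      inL2 G a a' → ¬ X r <+: X r' ∧ ¬ X r' <+: X r) :
    ∀ r : V, (sessionM D r).Nonempty → ∀ a ∈ sessionM D r,
      (∀ r' ∈ Ilink D a, ∀ r'' ∈ Ilink D a, r' ≠ r'' →
        ¬ X r' <+: X r'' ∧ ¬ X r'' <+: X r') ∧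
      (∑ r' ∈ Ilink D a, ((2 : ℝ) ^ (X r').length)⁻¹) ≤ 1 ∧
      ∀ l : ℕ, (∀ r' ∈ Ilink D a, (X r').length = l) → (Ilink D a).card ≤ 2 ^ l := by
  intro r _ a ha
  -- a is a genuine edge
  have hadj : G.Adj a.1 a.2 := by
    obtain ⟨y, hy, rfl⟩ := Finset.mem_image.1 ha
    simpa using (G.mem_neighborFinset r y).1 (hD r hy)
  have htx : ∀ r' : V, ∀ b ∈ sessionM D r', b.1 = r' := by
    intro r' b hb
    obtain ⟨y, _, rfl⟩ := Finset.mem_image.1 hb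
    rfl
  have hpart1 : ∀ r' ∈ Ilink D a, ∀ r'' ∈ Ilink D a, r' ≠ r'' →
      ¬ X r' <+: X r'' ∧ ¬ X r'' <+: X r' := by
    intro r' hr' r'' hr'' hne
    obtain ⟨b', hb', hb'a⟩ := (Finset.mem_filter.1 hr').2
    obtain ⟨b'', hb'', hb''a⟩ := (Finset.mem_filter.1 hr'').2
    have hL2 : inL2 G b' b'' := by
      rcases hb'a with h1 | hp'
      · rcases hb''a with h2 | hp''
        · exact absurd (by rw [← htx r' b' hb', h1, ← h2, htx r'' b'' hb'']) hne
        · exact Or.inl (by rw [h1]; exact hp'')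
      · rcases hb''a with h2 | hp''
        · exact Or.inl (by rw [h2]; exact linkPeer_symm hp')
        · exact Or.inr ⟨a, hadj, linkPeer_symm hp', hp''⟩
    exact hcf r' r'' hne b' hb' b'' hb'' hL2
  refine ⟨hpart1, ?_, ?_⟩
  · -- Kraft sum
    have hinj : Set.InjOn X (Ilink D a) := by
      intro r' hr' r'' hr'' hXeq
      by_contra hne
      exact (hpart1 r' hr' r'' hr'' hne).1 (hXeq ▸ List.prefix_refl _)
    rw [← Finset.sum_image (f := fun w : List Bool => ((2:ℝ) ^ w.length)⁻¹)
      (g := X) (fun x hx y hy => hinj hx hy)]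
    apply kraft_aux_s9
    intro x hx y hy hxy
    obtain ⟨r', hr', rfl⟩ := Finset.mem_image.1 hx
    obtain ⟨r'', hr'', rfl⟩ := Finset.mem_image.1 hy
    exact (hpart1 r' hr' r'' hr'' (fun h => hxy (by rw [h]))).1
  · intro l hl
    have hinj : Set.InjOn X (Ilink D a) := by
      intro r' hr' r'' hr'' hXeq
      by_contra hne
      exact (hpart1 r' hr' r'' hr'' hne).1 (hXeq ▸ List.prefix_refl _)
    have hsum : (∑ r' ∈ Ilink D a, ((2 : ℝ) ^ (X r').length)⁻¹) ≤ 1 := by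
      rw [← Finset.sum_image (f := fun w : List Bool => ((2:ℝ) ^ w.length)⁻¹)
        (g := X) (fun x hx y hy => hinj hx hy)]
      apply kraft_aux_s9
      intro x hx y hy hxy
      obtain ⟨r', hr', rfl⟩ := Finset.mem_image.1 hx
      obtain ⟨r'', hr'', rfl⟩ := Finset.mem_image.1 hy
      exact (hpart1 r' hr' r'' hr'' (fun h => hxy (by rw [h]))).1
    have heq : ∑ r' ∈ Ilink D a, ((2 : ℝ) ^ (X r').length)⁻¹
        = ((Ilink D a).card : ℝ) * ((2:ℝ) ^ l)⁻¹ := by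
      trans ∑ _r' ∈ Ilink D a, ((2:ℝ) ^ l)⁻¹
      · exact Finset.sum_congr rfl fun r' hr' => by rw [hl r' hr']
      · rw [Finset.sum_const, nsmul_eq_mul]
    have : ((Ilink D a).card : ℝ) * ((2:ℝ) ^ l)⁻¹ ≤ 1 := heq ▸ hsum
    have h2 : ((Ilink D a).card : ℝ) ≤ (2:ℝ) ^ l := by
      rwa [mul_inv_le_iff₀ (by positivity), one_mul] at this
    exact_mod_cast h2
end

section
/- Let K ≥ 1 be a natural number, let G be a finite simple graph, and let a collision-free K-channel configuration be given in which station r's state has length l_r. Then for every station r, the sum over r' ∈ V_r of 2^{-l_{r'}} is at most K·(1 - 2^{-l_r}). In particular, if all stations in V_r ∪ {r} use states of the same length l, then 2^l ≥ 1 + |V_r|/K. -/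
/-- All boolean lists of length `n`. -/
def allB : ℕ → Finset (List Bool)
  | 0 => {[]}
  | n + 1 => (allB n).image (List.cons true) ∪ (allB n).image (List.cons false)

lemma mem_allB : ∀ (n : ℕ) (l : List Bool), l ∈ allB n ↔ l.length = n
  | 0, l => by cases l <;> simp [allB]
  | n + 1, [] => by simp [allB]
  | n + 1, b :: t => by
    cases b <;> simp [allB, mem_allB n t]

lemma allB_card (n : ℕ) : (allB n).card = 2 ^ n := by
  induction n with
  | zero => rfl
  | succ n ih =>
    rw [allB, Finset.card_union_of_disjoint, Finset.card_image_of_injective,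
      Finset.card_image_of_injective, ih]
    · ring
    · intro a b h; simpa using h
    · intro a b h; simpa using h
    · rw [Finset.disjoint_left]
      rintro x hx hy
      simp only [Finset.mem_image] at hx hy
      obtain ⟨a, -, rfl⟩ := hx
      obtain ⟨b, -, hb⟩ := hy
      simp at hb

/-- Kraft's inequality for prefix-free finite sets of boolean strings. -/
lemma kraft (S : Finset (List Bool))
    (hpf : ∀ x ∈ S, ∀ y ∈ S, x ≠ y → ¬ x <+: y) :
    ∑ x ∈ S, ((2 : ℝ) ^ x.length)⁻¹ ≤ 1 := by
  set L := S.sup List.length with hL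
  have hlen : ∀ x ∈ S, x.length ≤ L := fun x hx => Finset.le_sup hx
  have hinj : ∀ x : List Bool, Function.Injective (x ++ ·) :=
    fun x a b h => List.append_cancel_left h
  have key : ∑ x ∈ S, 2 ^ (L - x.length) ≤ 2 ^ L := by
    have hsub : ∀ x ∈ S, (allB (L - x.length)).image (x ++ ·) ⊆ allB L := by
      intro x hx y hy
      simp only [Finset.mem_image] at hy
      obtain ⟨a, ha, rfl⟩ := hy
      rw [mem_allB] at ha ⊢
      rw [List.length_append, ha]
      have := hlen x hx; omega
    have hdisj : ∀ x ∈ S, ∀ y ∈ S, x ≠ y →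
        Disjoint ((allB (L - x.length)).image (x ++ ·))
          ((allB (L - y.length)).image (y ++ ·)) := by
      intro x hx y hy hxy
      rw [Finset.disjoint_left]
      intro z hzx hzy
      simp only [Finset.mem_image] at hzx hzy
      obtain ⟨a, -, rfl⟩ := hzx
      obtain ⟨b, -, hb⟩ := hzy
      have h1 : x <+: x ++ a := List.prefix_append x a
      have h2 : y <+: x ++ a := hb ▸ List.prefix_append y b
      rcases List.prefix_or_prefix_of_prefix h2 h1 with h | h
      · exact hpf y hy x hx (Ne.symm hxy) h
      · exact hpf x hx y hy hxy h
    calc ∑ x ∈ S, 2 ^ (L - x.length)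
        = ∑ x ∈ S, ((allB (L - x.length)).image (x ++ ·)).card := by
          refine Finset.sum_congr rfl fun x hx => ?_
          rw [Finset.card_image_of_injective _ (hinj x), allB_card]
      _ = (S.biUnion fun x => (allB (L - x.length)).image (x ++ ·)).card :=
          (Finset.card_biUnion hdisj).symm
      _ ≤ (allB L).card := Finset.card_le_card (Finset.biUnion_subset.mpr hsub)
      _ = 2 ^ L := allB_card L
  have h2L : (0 : ℝ) < 2 ^ L := by positivity
  have hrw : ∑ x ∈ S, ((2 : ℝ) ^ x.length)⁻¹
      = (∑ x ∈ S, (2 : ℝ) ^ (L - x.length)) / 2 ^ L := by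
    rw [Finset.sum_div]
    refine Finset.sum_congr rfl fun x hx => ?_
    field_simp
    rw [← pow_add]
    congr 1
    have := hlen x hx; omega
  rw [hrw, div_le_one h2L]
  calc ∑ x ∈ S, (2 : ℝ) ^ (L - x.length)
      = ((∑ x ∈ S, 2 ^ (L - x.length) : ℕ) : ℝ) := by push_cast; rfl
    _ ≤ ((2 ^ L : ℕ) : ℝ) := by exact_mod_cast key
    _ = (2 : ℝ) ^ L := by push_cast; rfl

/-- Let `K ≥ 1` and let `(ω, X)` be a collision-free `K`-channel configuration:
(i) for every pair of adjacent stations, neither of their states is a prefix of the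
other (regardless of channel), and (ii) for every pair of distinct non-adjacent
stations with a common neighbor that use the same channel, neither of their states
is a prefix of the other. Then for every station `r`,
`∑_{r' ∈ V_r} 2^{-l_{r'}} ≤ K·(1 - 2^{-l_r})`; in particular, if all stations in
`V_r ∪ {r}` use states of the same length `l`, then `2^l ≥ 1 + |V_r|/K`. -/
theorem multichannel_collisionFree_kraft {V : Type*} [Fintype V] [DecidableEq V]
    (K : ℕ) (hK : 1 ≤ K) (G : SimpleGraph V) [DecidableRel G.Adj]
    (ω : V → Fin K) (X : V → List Bool)
    (hcf1 : ∀ r r' : V, G.Adj r r' → ¬ X r <+: X r' ∧ ¬ X r' <+: X r)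
    (hcf2 : ∀ r r' : V, r ≠ r' → ¬ G.Adj r r' → (∃ z, G.Adj r z ∧ G.Adj z r') →
      ω r = ω r' → ¬ X r <+: X r' ∧ ¬ X r' <+: X r) :
    ∀ r : V,
      (∑ r' ∈ G.neighborFinset r, ((2 : ℝ) ^ (X r').length)⁻¹) ≤
        (K : ℝ) * (1 - ((2 : ℝ) ^ (X r).length)⁻¹) ∧
      ∀ l : ℕ, (∀ r' ∈ insert r (G.neighborFinset r), (X r').length = l) →
        (1 : ℝ) + (G.degree r : ℝ) / (K : ℝ) ≤ (2 : ℝ) ^ l := by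
  intro r
  have hrn : r ∉ G.neighborFinset r := by simp
  -- per-channel bound
  have hk : ∀ k : Fin K,
      ((2 : ℝ) ^ (X r).length)⁻¹ +
        ∑ s ∈ (G.neighborFinset r).filter (fun s => ω s = k),
          ((2 : ℝ) ^ (X s).length)⁻¹ ≤ 1 := by
    intro k
    set F := (G.neighborFinset r).filter (fun s => ω s = k) with hF
    have hrF : r ∉ F := fun h => hrn (Finset.mem_filter.mp h).1
    -- pairwise prefix-free on insert r F
    have hpf : ∀ s ∈ insert r F, ∀ t ∈ insert r F, s ≠ t → ¬ X s <+: X t := by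
      intro s hs t ht hst
      by_cases hadj : G.Adj s t
      · exact (hcf1 s t hadj).1
      · rcases Finset.mem_insert.mp hs with rfl | hs'
        · rcases Finset.mem_insert.mp ht with rfl | ht'
          · exact absurd rfl hst
          · exact absurd ((SimpleGraph.mem_neighborFinset ..).mp
              (Finset.mem_filter.mp ht').1) hadj
        · rcases Finset.mem_insert.mp ht with rfl | ht'
          · exact absurd ((SimpleGraph.mem_neighborFinset ..).mp
              (Finset.mem_filter.mp hs').1).symm hadj
          · obtain ⟨hs1, hs2⟩ := Finset.mem_filter.mp hs'
            obtain ⟨ht1, ht2⟩ := Finset.mem_filter.mp ht'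
            exact (hcf2 s t hst hadj
              ⟨r, ((SimpleGraph.mem_neighborFinset ..).mp hs1).symm,
                (SimpleGraph.mem_neighborFinset ..).mp ht1⟩ (hs2.trans ht2.symm)).1
    have hXinj : ∀ s ∈ insert r F, ∀ t ∈ insert r F, X s = X t → s = t := by
      intro s hs t ht h
      by_contra hne
      exact hpf s hs t ht hne (h ▸ List.prefix_refl _)
    have h1 : ∑ y ∈ (insert r F).image X, ((2 : ℝ) ^ y.length)⁻¹ ≤ 1 := by
      refine kraft _ ?_
      intro x hx y hy hxy
      simp only [Finset.mem_image] at hx hy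
      obtain ⟨s, hs, rfl⟩ := hx
      obtain ⟨t, ht, rfl⟩ := hy
      exact hpf s hs t ht (fun h => hxy (h ▸ rfl))
    rw [Finset.sum_image hXinj, Finset.sum_insert hrF] at h1
    exact h1
  have hsplit : ∑ r' ∈ G.neighborFinset r, ((2 : ℝ) ^ (X r').length)⁻¹
      = ∑ k : Fin K, ∑ s ∈ (G.neighborFinset r).filter (fun s => ω s = k),
          ((2 : ℝ) ^ (X s).length)⁻¹ :=
    (Finset.sum_fiberwise _ ω _).symm
  have main : (∑ r' ∈ G.neighborFinset r, ((2 : ℝ) ^ (X r').length)⁻¹) ≤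
      (K : ℝ) * (1 - ((2 : ℝ) ^ (X r).length)⁻¹) := by
    rw [hsplit]
    calc ∑ k : Fin K, ∑ s ∈ (G.neighborFinset r).filter (fun s => ω s = k),
            ((2 : ℝ) ^ (X s).length)⁻¹
        ≤ ∑ _k : Fin K, (1 - ((2 : ℝ) ^ (X r).length)⁻¹) := by
          refine Finset.sum_le_sum fun k _ => ?_
          linarith [hk k]
      _ = (K : ℝ) * (1 - ((2 : ℝ) ^ (X r).length)⁻¹) := by
          simp [Finset.sum_const, Finset.card_univ]
          ring
  refine ⟨main, fun l hl => ?_⟩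
  have hrl : (X r).length = l := hl r (Finset.mem_insert_self r _)
  have hdeg : ∑ r' ∈ G.neighborFinset r, ((2 : ℝ) ^ (X r').length)⁻¹
      = (G.degree r : ℝ) * ((2 : ℝ) ^ l)⁻¹ := by
    have hc : ∀ s ∈ G.neighborFinset r,
        ((2 : ℝ) ^ (X s).length)⁻¹ = ((2 : ℝ) ^ l)⁻¹ := fun s hs => by
      rw [hl s (Finset.mem_insert_of_mem hs)]
    rw [Finset.sum_congr rfl hc, Finset.sum_const, nsmul_eq_mul, SimpleGraph.degree]
  rw [hdeg, hrl] at main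
  have h2l : (0 : ℝ) < 2 ^ l := by positivity
  have hKpos : (0 : ℝ) < K := by exact_mod_cast hK
  rw [add_comm, ← le_sub_iff_add_le, div_le_iff₀ hKpos]
  have := mul_le_mul_of_nonneg_right main h2l.le
  have hcancel : ((2 : ℝ) ^ l)⁻¹ * 2 ^ l = 1 := inv_mul_cancel₀ (ne_of_gt h2l)
  nlinarith [this, hcancel]
end

section
/- Let K ≥ 1 be a natural number, let G be a finite simple graph, and for each station r let V²_r denote the set of stations at distance 1 or 2 from r in G. If each station r uses states of length l̄_r = ⌈log₂( max over r' ∈ V²_r ∪ {r} of (1 + |V²_{r'}|) )⌉, then a collision-free K-channel configuration exists. -/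
/-- Greedy coloring existence on a symmetric neighborhood system. -/
lemma exists_greedy {V : Type*} [DecidableEq V] (N : V → Finset V)
    (hsymm : ∀ r r', r' ∈ N r → r ∈ N r') (s : Finset V) :
    ∃ c : V → ℕ, ∀ r ∈ s, c r ≤ (N r).card ∧
      ∀ r' ∈ s, r' ∈ N r → r ≠ r' → c r ≠ c r' := by
  classical
  induction s using Finset.induction_on with
  | empty => exact ⟨fun _ => 0, by simp⟩
  | @insert a s ha ih =>
    obtain ⟨c, hc⟩ := ih
    set T := (N a ∩ s).image c with hT
    have hcardT : T.card < (Finset.range ((N a ∩ s).card + 1)).card := by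
      simpa using Nat.lt_succ_of_le (Finset.card_image_le)
    have hns : ¬ Finset.range ((N a ∩ s).card + 1) ⊆ T :=
      fun h => absurd (Finset.card_le_card h) (not_le.mpr hcardT)
    obtain ⟨v, hvmem, hvT⟩ := Finset.not_subset.mp hns
    have hvle : v ≤ (N a).card := by
      have : v ≤ (N a ∩ s).card := Nat.lt_succ_iff.mp (Finset.mem_range.mp hvmem)
      exact this.trans (Finset.card_le_card Finset.inter_subset_left)
    refine ⟨Function.update c a v, ?_⟩
    intro r hr
    rcases Finset.mem_insert.mp hr with rfl | hrs
    · refine ⟨by simpa using hvle, ?_⟩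
      intro r' hr' hrN hne
      have hr's : r' ∈ s := by
        rcases Finset.mem_insert.mp hr' with rfl | h
        · exact absurd rfl hne
        · exact h
      have hr'a : r' ≠ r := fun h => hne h.symm
      rw [Function.update_self, Function.update_of_ne hr'a]
      intro h
      exact hvT (by exact Finset.mem_image.mpr ⟨r', Finset.mem_inter.mpr ⟨hrN, hr's⟩, h.symm⟩)
    · have hra : r ≠ a := fun h => ha (h ▸ hrs)
      refine ⟨by rw [Function.update_of_ne hra]; exact (hc r hrs).1, ?_⟩
      intro r' hr' hrN hne
      rcases Finset.mem_insert.mp hr' with rfl | hr's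
      · rw [Function.update_of_ne hra, Function.update_self]
        intro h
        exact hvT (Finset.mem_image.mpr ⟨r, Finset.mem_inter.mpr ⟨hsymm _ _ hrN, hrs⟩, h⟩)
      · have hr'a : r' ≠ a := fun h => ha (h ▸ hr's)
        rw [Function.update_of_ne hra, Function.update_of_ne hr'a]
        exact (hc r hrs).2 r' hr's hrN hne


/-- Let `K ≥ 1`. If each station `r` uses states of length
`l̄_r = ⌈log₂(max_{r' ∈ V²_r ∪ {r}} (1 + |V²_{r'}|))⌉`, then a collision-free
`K`-channel configuration `(ω, X)` exists: (i) for every pair of adjacent stations,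
neither of their states is a prefix of the other (regardless of channel), and
(ii) for every pair of distinct non-adjacent stations with a common neighbor that
use the same channel, neither of their states is a prefix of the other. -/
theorem multichannel_collisionFree_exists {V : Type*} [Fintype V] [DecidableEq V]
    (K : ℕ) (hK : 1 ≤ K) (G : SimpleGraph V) [DecidableRel G.Adj] :
    ∃ (ω : V → Fin K) (X : V → List Bool),
      (∀ r : V, (X r).length =
        Nat.clog 2 ((insert r (twoHopSet G r)).sup fun r' => 1 + (twoHopSet G r').card)) ∧
      (∀ r r' : V, G.Adj r r' → ¬ X r <+: X r' ∧ ¬ X r' <+: X r) ∧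
      (∀ r r' : V, r ≠ r' → ¬ G.Adj r r' → (∃ z, G.Adj r z ∧ G.Adj z r') →
        ω r = ω r' → ¬ X r <+: X r' ∧ ¬ X r' <+: X r) := by
  classical
  set L : V → ℕ := fun r =>
    Nat.clog 2 ((insert r (twoHopSet G r)).sup fun r' => 1 + (twoHopSet G r').card) with hL
  have hsymm : ∀ r r' : V, r' ∈ twoHopSet G r → r ∈ twoHopSet G r' := by
    intro r r' h
    simp only [twoHopSet, Finset.mem_filter, Finset.mem_univ, true_and] at h ⊢
    refine ⟨h.1.symm, ?_⟩
    rcases h.2 with h2 | ⟨z, hz1, hz2⟩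
    · exact Or.inl h2.symm
    · exact Or.inr ⟨z, hz2.symm, hz1.symm⟩
  obtain ⟨c, hc⟩ := exists_greedy (fun r => twoHopSet G r) hsymm Finset.univ
  -- bound: for r' in the closed 2-hop neighborhood of r, c r' < 2 ^ L r
  have hbound : ∀ r r' : V, r' ∈ insert r (twoHopSet G r) → c r' < 2 ^ L r := by
    intro r r' hr'
    have h1 : 1 + (twoHopSet G r').card ≤
        (insert r (twoHopSet G r)).sup fun r'' => 1 + (twoHopSet G r'').card :=
      Finset.le_sup (f := fun r'' => 1 + (twoHopSet G r'').card) hr'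
    have h2 : ((insert r (twoHopSet G r)).sup fun r'' => 1 + (twoHopSet G r'').card)
        ≤ 2 ^ L r := Nat.le_pow_clog (by norm_num) _
    have h3 : c r' < 1 + (twoHopSet G r').card := by
      have := (hc r' (Finset.mem_univ r')).1; omega
    omega
  have key : ∀ r r' : V, r' ∈ twoHopSet G r →
      ¬ (List.ofFn (fun i : Fin (L r) => (c r).testBit i)) <+:
        (List.ofFn (fun i : Fin (L r') => (c r').testBit i)) := by
    intro r r' hmem hpre
    have hne : r ≠ r' := by
      simp only [twoHopSet, Finset.mem_filter] at hmem; exact hmem.2.1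
    have hcc : c r ≠ c r' :=
      (hc r (Finset.mem_univ r)).2 r' (Finset.mem_univ r') hmem hne
    apply hcc
    have hcr : c r < 2 ^ L r := hbound r r (Finset.mem_insert_self _ _)
    have hcr' : c r' < 2 ^ L r := hbound r r' (Finset.mem_insert_of_mem hmem)
    have hlen : L r ≤ L r' := by simpa using hpre.length_le
    apply Nat.eq_of_testBit_eq
    intro i
    by_cases hi : i < L r
    · have hgl : i < (List.ofFn (fun i : Fin (L r) => (c r).testBit i)).length := by
        simpa using hi
      have := hpre.getElem hgl
      simpa using this
    · push_neg at hi
      have hp : 2 ^ L r ≤ 2 ^ i := Nat.pow_le_pow_right (by norm_num) hi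
      rw [Nat.testBit_lt_two_pow (lt_of_lt_of_le hcr hp),
        Nat.testBit_lt_two_pow (lt_of_lt_of_le hcr' hp)]
  refine ⟨fun _ => ⟨0, hK⟩, fun r => List.ofFn (fun i : Fin (L r) => (c r).testBit i),
    fun r => by simp only [List.length_ofFn, hL], ?_, ?_⟩
  · intro r r' hadj
    have h1 : r' ∈ twoHopSet G r := by
      simp only [twoHopSet, Finset.mem_filter, Finset.mem_univ, true_and]
      exact ⟨hadj.ne, Or.inl hadj⟩
    exact ⟨key r r' h1, key r' r (hsymm r r' h1)⟩
  · intro r r' hne hnadj hz _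
    have h1 : r' ∈ twoHopSet G r := by
      simp only [twoHopSet, Finset.mem_filter, Finset.mem_univ, true_and]
      exact ⟨hne, Or.inr hz⟩
    exact ⟨key r r' h1, key r' r (hsymm r r' h1)⟩
end

section
/- Let K ≥ 1 be a natural number, let G be a finite simple graph with multicast sessions, and let a collision-free K-channel multicast configuration be given in which station r's state has length l_r. Then for every station r with M_r ≠ ∅ and every link a ∈ M_r, letting I_a = { r' : M_{r'} ∩ (L_a ∪ {a}) ≠ ∅ }, the sum over r' ∈ I_a with r' ≠ r of 2^{-l_{r'}} is at most K·(1 - 2^{-l_r}). In particular, if all stations in I_a use states of the same length l, then 2^l ≥ 1 + (|I_a| - 1)/K. -/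
lemma kraft_nat' {α : Type*} [DecidableEq α] (S : Finset α) (X : α → List Bool) (N : ℕ)
    (hlen : ∀ a ∈ S, (X a).length ≤ N)
    (hpf : ∀ a ∈ S, ∀ b ∈ S, a ≠ b → ¬ X a <+: X b) :
    ∑ a ∈ S, 2 ^ (N - (X a).length) ≤ 2 ^ N := by
  classical
  set T := S.sigma (fun a => (Finset.univ : Finset (List.Vector Bool (N - (X a).length)))) with hT
  have hcardT : T.card = ∑ a ∈ S, 2 ^ (N - (X a).length) := by
    rw [hT, Finset.card_sigma]
    refine Finset.sum_congr rfl fun a _ => ?_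
    simp [Finset.card_univ, card_vector]
  have key : T.card ≤ Fintype.card (List.Vector Bool N) := by
    have hmem : ∀ p : (Σ a : α, List.Vector Bool (N - (X a).length)), p ∈ T →
        (X p.1 ++ p.2.toList).length = N := by
      rintro ⟨a, v⟩ hp
      have ha : a ∈ S := (Finset.mem_sigma.mp hp).1
      have := hlen a ha
      simp [v.toList_length]
      omega
    rw [← Finset.card_univ]
    refine Finset.card_le_card_of_injOn
      (fun p => if h : p ∈ T then (⟨X p.1 ++ p.2.toList, hmem p h⟩ : List.Vector Bool N)
        else default) (fun _ _ => Finset.mem_univ _) ?_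
    rintro ⟨a, v⟩ hp ⟨b, w⟩ hq heq
    simp only [Finset.mem_coe] at hp hq
    simp only [dif_pos hp, dif_pos hq] at heq
    have heq' : X a ++ v.toList = X b ++ w.toList := by
      simpa [hp, hq] using congrArg List.Vector.toList heq
    have ha : a ∈ S := (Finset.mem_sigma.mp hp).1
    have hb : b ∈ S := (Finset.mem_sigma.mp hq).1
    have hpa : X a <+: X a ++ v.toList := List.prefix_append _ _
    have hpb : X b <+: X a ++ v.toList := heq' ▸ List.prefix_append _ _
    have hab : a = b := by
      by_contra hne
      rcases le_total (X a).length (X b).length with hle | hle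
      · exact hpf a ha b hb hne (List.prefix_of_prefix_length_le hpa hpb hle)
      · exact hpf b hb a ha (Ne.symm hne) (List.prefix_of_prefix_length_le hpb hpa hle)
    subst hab
    have hv : v.toList = w.toList := by
      have := List.append_cancel_left heq'
      exact this
    have : v = w := List.Vector.toList_injective hv
    subst this
    rfl
  rw [hcardT, card_vector] at key
  simpa using key

lemma kraft_real {α : Type*} [DecidableEq α] (S : Finset α) (X : α → List Bool)
    (hpf : ∀ a ∈ S, ∀ b ∈ S, a ≠ b → ¬ X a <+: X b) :
    ∑ a ∈ S, ((2 : ℝ) ^ (X a).length)⁻¹ ≤ 1 := by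
  classical
  obtain ⟨N, hN⟩ : ∃ N, ∀ a ∈ S, (X a).length ≤ N := by
    refine ⟨S.sup (fun a => (X a).length), fun a ha => Finset.le_sup (f := fun a => (X a).length) ha⟩
  have h := kraft_nat' S X N hN hpf
  have h2 : (∑ a ∈ S, (2 : ℝ) ^ (N - (X a).length)) ≤ 2 ^ N := by
    exact_mod_cast h
  have h3 : ∑ a ∈ S, (2 : ℝ) ^ (N - (X a).length)
      = 2 ^ N * ∑ a ∈ S, ((2 : ℝ) ^ (X a).length)⁻¹ := by
    rw [Finset.mul_sum]
    refine Finset.sum_congr rfl fun a ha => ?_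
    rw [pow_sub₀ (2 : ℝ) two_ne_zero (hN a ha)]
  rw [h3] at h2
  have hpos : (0 : ℝ) < 2 ^ N := by positivity
  nlinarith [hpos]

lemma sessionM_fst {V : Type*} [DecidableEq V] {D : V → Finset V} {r : V} {b : V × V}
    (hb : b ∈ sessionM D r) : b.1 = r := by
  simp only [sessionM, Finset.mem_image] at hb
  obtain ⟨y, _, rfl⟩ := hb
  rfl



/-- Let `K ≥ 1` and let `(ω, X)` be a collision-free `K`-channel multicast
configuration: for every pair of distinct stations `r ≠ r'` and links `a ∈ M_r`,
`a' ∈ M_{r'}`, if `a' ∈ L_a` then neither `X r` nor `X r'` is a prefix of the other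
(regardless of channel), and if `a' ∈ L²_a` and `ω_r = ω_{r'}` then neither is a
prefix of the other. Then for every station `r` with `M_r ≠ ∅` and every `a ∈ M_r`,
`∑_{r' ∈ I_a, r' ≠ r} 2^{-l_{r'}} ≤ K·(1 - 2^{-l_r})`; in particular, if all
stations in `I_a` use states of the same length `l`, then `2^l ≥ 1 + (|I_a|-1)/K`. -/
theorem multichannel_multicast_collisionFree_kraft {V : Type*} [Fintype V]
    [DecidableEq V] (K : ℕ) (hK : 1 ≤ K) (G : SimpleGraph V) [DecidableRel G.Adj]
    (D : V → Finset V) (hD : ∀ r : V, D r ⊆ G.neighborFinset r)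
    (ω : V → Fin K) (X : V → List Bool)
    (hcf : ∀ r r' : V, r ≠ r' → ∀ a ∈ sessionM D r, ∀ a' ∈ sessionM D r',
      (linkPeer a a' → ¬ X r <+: X r' ∧ ¬ X r' <+: X r) ∧
      (inL2 G a a' → ω r = ω r' → ¬ X r <+: X r' ∧ ¬ X r' <+: X r)) :
    ∀ r : V, (sessionM D r).Nonempty → ∀ a ∈ sessionM D r,
      (∑ r' ∈ (Ilink D a).erase r, ((2 : ℝ) ^ (X r').length)⁻¹) ≤
        (K : ℝ) * (1 - ((2 : ℝ) ^ (X r).length)⁻¹) ∧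
      ∀ l : ℕ, (∀ r' ∈ Ilink D a, (X r').length = l) →
        (1 : ℝ) + ((Ilink D a).card - 1 : ℝ) / (K : ℝ) ≤ (2 : ℝ) ^ l := by
  classical
  intro r hMr a ha
  -- basic facts about a
  obtain ⟨x, hx, hax⟩ := Finset.mem_image.mp ha
  have hAdj : G.Adj a.1 a.2 := by
    have : G.Adj r x := (SimpleGraph.mem_neighborFinset G r x).mp (hD r hx)
    rw [← hax]; exact this
  have hrI : r ∈ Ilink D a := by
    simp only [Ilink, Finset.mem_filter, Finset.mem_univ, true_and]
    exact ⟨a, ha, Or.inl rfl⟩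
  have hpeer : ∀ r' ∈ (Ilink D a).erase r, ∃ b ∈ sessionM D r', linkPeer a b := by
    intro r' hr'
    obtain ⟨hne, hI⟩ := Finset.mem_erase.mp hr'
    simp only [Ilink, Finset.mem_filter, Finset.mem_univ, true_and] at hI
    obtain ⟨b, hb, hcase⟩ := hI
    rcases hcase with rfl | hpeer
    · exact absurd ((sessionM_fst hb).symm.trans (hax ▸ rfl : b.1 = r)) hne
    · exact ⟨b, hb, hpeer⟩
  -- pairwise prefix-freeness with r
  have hpref_r : ∀ r' ∈ (Ilink D a).erase r,
      ¬ X r <+: X r' ∧ ¬ X r' <+: X r := by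
    intro r' hr'
    obtain ⟨b, hb, hp⟩ := hpeer r' hr'
    exact (hcf r r' (Finset.ne_of_mem_erase hr').symm a ha b hb).1 hp
  -- pairwise prefix-freeness among same-channel stations
  have hpref_pair : ∀ r1 ∈ (Ilink D a).erase r, ∀ r2 ∈ (Ilink D a).erase r,
      r1 ≠ r2 → ω r1 = ω r2 → ¬ X r1 <+: X r2 := by
    intro r1 hr1 r2 hr2 hne hω
    obtain ⟨b1, hb1, hp1⟩ := hpeer r1 hr1
    obtain ⟨b2, hb2, hp2⟩ := hpeer r2 hr2
    have hL2 : inL2 G b1 b2 := Or.inr ⟨a, hAdj, linkPeer_symm hp1, hp2⟩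
    exact ((hcf r1 r2 hne b1 hb1 b2 hb2).2 hL2 hω).1
  -- first part
  have main : (∑ r' ∈ (Ilink D a).erase r, ((2 : ℝ) ^ (X r').length)⁻¹) ≤
      (K : ℝ) * (1 - ((2 : ℝ) ^ (X r).length)⁻¹) := by
    rw [← Finset.sum_fiberwise ((Ilink D a).erase r) ω
      (fun r' => ((2 : ℝ) ^ (X r').length)⁻¹)]
    have hbound : ∀ k : Fin K,
        (∑ r' ∈ ((Ilink D a).erase r).filter (fun i => ω i = k),
          ((2 : ℝ) ^ (X r').length)⁻¹) ≤ 1 - ((2 : ℝ) ^ (X r).length)⁻¹ := by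
      intro k
      set S' := ((Ilink D a).erase r).filter (fun i => ω i = k) with hS'
      have hS'sub : S' ⊆ (Ilink D a).erase r := Finset.filter_subset _ _
      have hrS' : r ∉ S' := fun h => (Finset.mem_erase.mp (hS'sub h)).1 rfl
      have hk := kraft_real (insert r S') X ?_
      · rw [Finset.sum_insert hrS'] at hk
        linarith
      · intro u hu v hv huv
        rcases Finset.mem_insert.mp hu with rfl | hu
        · rcases Finset.mem_insert.mp hv with rfl | hv
          · exact absurd rfl huv
          · exact (hpref_r v (hS'sub hv)).1
        · rcases Finset.mem_insert.mp hv with rfl | hv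
          · exact (hpref_r u (hS'sub hu)).2
          · have hu' := Finset.mem_filter.mp hu
            have hv' := Finset.mem_filter.mp hv
            exact hpref_pair u hu'.1 v hv'.1 huv (hu'.2.trans hv'.2.symm)
    calc (∑ k : Fin K, ∑ r' ∈ ((Ilink D a).erase r).filter (fun i => ω i = k),
          ((2 : ℝ) ^ (X r').length)⁻¹)
        ≤ ∑ _k : Fin K, (1 - ((2 : ℝ) ^ (X r).length)⁻¹) :=
          Finset.sum_le_sum fun k _ => hbound k
      _ = (K : ℝ) * (1 - ((2 : ℝ) ^ (X r).length)⁻¹) := by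
          simp [Finset.sum_const, Finset.card_univ, nsmul_eq_mul]
          ring
  refine ⟨main, ?_⟩
  -- second part
  intro l hl
  have hlr : (X r).length = l := hl r hrI
  have hcardpos : 1 ≤ (Ilink D a).card := Finset.card_pos.mpr ⟨r, hrI⟩
  have hcarde : ((Ilink D a).erase r).card = (Ilink D a).card - 1 :=
    Finset.card_erase_of_mem hrI
  have hsum : (∑ r' ∈ (Ilink D a).erase r, ((2 : ℝ) ^ (X r').length)⁻¹)
      = (((Ilink D a).card : ℝ) - 1) * ((2 : ℝ) ^ l)⁻¹ := by
    rw [Finset.sum_congr rfl (fun r' hr' => by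
      rw [hl r' (Finset.mem_of_mem_erase hr')]), Finset.sum_const, hcarde,
      nsmul_eq_mul, Nat.cast_sub hcardpos, Nat.cast_one]
  rw [hsum, hlr] at main
  have hp : (0 : ℝ) < 2 ^ l := by positivity
  have hKpos : (0 : ℝ) < K := by exact_mod_cast hK
  have hc : (0 : ℝ) ≤ ((Ilink D a).card : ℝ) - 1 := by
    have : (1 : ℝ) ≤ ((Ilink D a).card : ℝ) := by exact_mod_cast hcardpos
    linarith
  rw [← sub_nonneg]
  have h1 := mul_le_mul_of_nonneg_right main hp.le
  have h2 : ((2 : ℝ) ^ l)⁻¹ * (2 : ℝ) ^ l = 1 := inv_mul_cancel₀ (ne_of_gt hp)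
  have h3 : (((Ilink D a).card : ℝ) - 1) ≤ (K : ℝ) * ((2 : ℝ) ^ l - 1) := by
    nlinarith
  have h4 : (((Ilink D a).card : ℝ) - 1) / (K : ℝ) ≤ (2 : ℝ) ^ l - 1 := by
    rw [div_le_iff₀ hKpos]
    nlinarith
  linarith
end
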